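/- arXiv:2111.14614 — 9 statements merged into one kernel-verified Lean document; each statement's English description precedes it below -/
import Mathlib

section
/- Let Y be a complex Banach space, let n ∈ ℕ, let ν : ℝⁿ → (0,∞) be a function such that 1/ν is locally bounded, let 𝒫 be the metric space associated with C_{0,ν}(ℝⁿ : Y), and let F : ℝⁿ → Y be continuous. If F is Bohr 𝒫-almost periodic, then F is bounded and Levitan N-almost periodic. -/
noncomputable section

open Filter

/-- The space `C_{0,ν}(ℝⁿ : Y)` of continuous functions `u` with
`‖u(t)‖ ν(t) → 0` as `|t| → ∞`. -/
def C0nu {n : ℕ} {Y : Type*} [NormedAddCommGroup Y]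
    (ν : EuclideanSpace ℝ (Fin n) → ℝ) : Set (EuclideanSpace ℝ (Fin n) → Y) :=
  {u | Continuous u ∧
    Filter.Tendsto (fun t => ‖u t‖ * ν t)
      (Filter.comap (fun t : EuclideanSpace ℝ (Fin n) => ‖t‖) Filter.atTop) (nhds 0)}

/-- Bohr `𝒫`-almost periodicity, where `𝒫` is the metric space associated with
`C_{0,ν}(ℝⁿ : Y)` (so that `‖f‖_P = sup_t ‖f(t)‖ ν(t)`). -/
def BohrC0nuAP {n : ℕ} {Y : Type*} [NormedAddCommGroup Y]
    (ν : EuclideanSpace ℝ (Fin n) → ℝ) (F : EuclideanSpace ℝ (Fin n) → Y) : Prop :=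
  ∀ ε : ℝ, 0 < ε → ∃ l : ℝ, 0 < l ∧ ∀ t₀ : EuclideanSpace ℝ (Fin n),
    ∃ τ : EuclideanSpace ℝ (Fin n), ‖τ - t₀‖ ≤ l ∧
      (fun t => F (t + τ) - F t) ∈ C0nu ν ∧
      ∀ t, ‖F (t + τ) - F t‖ * ν t ≤ ε

/-! The weighted bound `‖F(t+τ) - F(t)‖ ν(t) ≤ ε` turns into the plain bound `ε M` wherever
`1/ν ≤ M`. For boundedness, every `s` is `u + τ` with `u` in the compact ball `B(0,l)`, so `F(s)`
stays within `M` of the bounded set `F(B(0,l))`. -/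

theorem le_mul_of_mul_le_of_one_div_le {a w ε M : ℝ} (hw : 0 < w) (hε : 0 ≤ ε)
    (h : a * w ≤ ε) (hM : 1 / w ≤ M) : a ≤ ε * M :=
  calc a ≤ ε * (1 / w) := by rwa [mul_one_div, le_div_iff₀ hw]
    _ ≤ ε * M := mul_le_mul_of_nonneg_left hM hε

theorem IsCompact.exists_bound_of_forall_near_image {X Y : Type*} [TopologicalSpace X]
    [NormedAddCommGroup Y] {K : Set X} (hK : IsCompact K) {F : X → Y} (hF : ContinuousOn F K)
    {C : ℝ} (h : ∀ s, ∃ u ∈ K, ‖F s - F u‖ ≤ C) : ∃ M, ∀ s, ‖F s‖ ≤ M := by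
  obtain ⟨B, hB⟩ := hK.exists_bound_of_continuousOn hF
  refine ⟨B + C, fun s => ?_⟩
  obtain ⟨u, huK, hu⟩ := h s
  calc ‖F s‖ = ‖F u + (F s - F u)‖ := by rw [add_sub_cancel]
    _ ≤ ‖F u‖ + ‖F s - F u‖ := norm_add_le _ _
    _ ≤ B + C := add_le_add (hB u huK) hu

namespace BohrC0nuAP

variable {n : ℕ} {Y : Type*} [NormedAddCommGroup Y] {ν : EuclideanSpace ℝ (Fin n) → ℝ}
  {F : EuclideanSpace ℝ (Fin n) → Y}

theorem exists_bound (hAP : BohrC0nuAP ν F) (hν : ∀ t, 0 < ν t)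
    (hloc : ∀ r : ℝ, 0 < r → ∃ M : ℝ, ∀ t : EuclideanSpace ℝ (Fin n), ‖t‖ ≤ r → 1 / ν t ≤ M)
    (hF : Continuous F) : ∃ M : ℝ, ∀ t, ‖F t‖ ≤ M := by
  obtain ⟨l, hl, hτ⟩ := hAP 1 one_pos
  obtain ⟨M, hM⟩ := hloc l hl
  refine (isCompact_closedBall 0 l).exists_bound_of_forall_near_image hF.continuousOn
    (C := 1 * M) fun s => ?_
  obtain ⟨τ, hτs, -, hle⟩ := hτ s
  have hu : ‖s - τ‖ ≤ l := by rwa [norm_sub_rev]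
  refine ⟨s - τ, by rwa [mem_closedBall_zero_iff], ?_⟩
  have key := le_mul_of_mul_le_of_one_div_le (hν _) zero_le_one (hle (s - τ)) (hM _ hu)
  rwa [sub_add_cancel] at key

theorem levitan (hAP : BohrC0nuAP ν F) (hν : ∀ t, 0 < ν t)
    (hloc : ∀ r : ℝ, 0 < r → ∃ M : ℝ, ∀ t : EuclideanSpace ℝ (Fin n), ‖t‖ ≤ r → 1 / ν t ≤ M)
    {ε : ℝ} (hε : 0 < ε) {N : ℝ} (hN : 0 < N) :
    ∃ l : ℝ, 0 < l ∧ ∀ t₀ : EuclideanSpace ℝ (Fin n), ∃ τ : EuclideanSpace ℝ (Fin n),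
      ‖τ - t₀‖ ≤ l ∧ ∀ t : EuclideanSpace ℝ (Fin n), ‖t‖ ≤ N → ‖F (t + τ) - F t‖ ≤ ε := by
  obtain ⟨M, hM⟩ := hloc N hN
  have hMpos : 0 < M := (one_div_pos.2 (hν 0)).trans_le (hM 0 (by simpa using hN.le))
  obtain ⟨l, hl, hτ⟩ := hAP (ε / M) (div_pos hε hMpos)
  refine ⟨l, hl, fun t₀ => ?_⟩
  obtain ⟨τ, hτt₀, -, hle⟩ := hτ t₀
  refine ⟨τ, hτt₀, fun t ht => ?_⟩
  calc ‖F (t + τ) - F t‖ ≤ ε / M * M :=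
        le_mul_of_mul_le_of_one_div_le (hν t) (div_pos hε hMpos).le (hle t) (hM t ht)
    _ = ε := div_mul_cancel₀ ε hMpos.ne'

end BohrC0nuAP

theorem stmt0_general {n : ℕ} {Y : Type*} [NormedAddCommGroup Y]
    (ν : EuclideanSpace ℝ (Fin n) → ℝ) (hν : ∀ t, 0 < ν t)
    (hloc : ∀ r : ℝ, 0 < r → ∃ M : ℝ, ∀ t : EuclideanSpace ℝ (Fin n), ‖t‖ ≤ r → 1 / ν t ≤ M)
    (F : EuclideanSpace ℝ (Fin n) → Y) (hF : Continuous F)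
    (hAP : BohrC0nuAP ν F) :
    (∃ M : ℝ, ∀ t, ‖F t‖ ≤ M) ∧
      (∀ ε : ℝ, 0 < ε → ∀ N : ℝ, 0 < N → ∃ l : ℝ, 0 < l ∧
        ∀ t₀ : EuclideanSpace ℝ (Fin n), ∃ τ : EuclideanSpace ℝ (Fin n), ‖τ - t₀‖ ≤ l ∧
          ∀ t : EuclideanSpace ℝ (Fin n), ‖t‖ ≤ N → ‖F (t + τ) - F t‖ ≤ ε) :=
  ⟨hAP.exists_bound hν hloc hF, fun _ hε _ hN => hAP.levitan hν hloc hε hN⟩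

/-- If `F : ℝⁿ → Y` is continuous and Bohr `𝒫`-almost periodic, where `𝒫` is associated with
`C_{0,ν}(ℝⁿ : Y)` and `1/ν` is locally bounded, then `F` is bounded and Levitan
`N`-almost periodic. -/
theorem stmt0 {n : ℕ} {Y : Type*} [NormedAddCommGroup Y] [NormedSpace ℂ Y] [CompleteSpace Y]
    (ν : EuclideanSpace ℝ (Fin n) → ℝ) (hν : ∀ t, 0 < ν t)
    (hloc : ∀ r : ℝ, 0 < r → ∃ M : ℝ, ∀ t : EuclideanSpace ℝ (Fin n), ‖t‖ ≤ r → 1 / ν t ≤ M)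
    (F : EuclideanSpace ℝ (Fin n) → Y) (hF : Continuous F)
    (hAP : BohrC0nuAP ν F) :
    (∃ M : ℝ, ∀ t, ‖F t‖ ≤ M) ∧
      (∀ ε : ℝ, 0 < ε → ∀ N : ℝ, 0 < N → ∃ l : ℝ, 0 < l ∧
        ∀ t₀ : EuclideanSpace ℝ (Fin n), ∃ τ : EuclideanSpace ℝ (Fin n), ‖τ - t₀‖ ≤ l ∧
          ∀ t : EuclideanSpace ℝ (Fin n), ‖t‖ ≤ N → ‖F (t + τ) - F t‖ ≤ ε) :=
  stmt0_general ν hν hloc F hF hAP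
end
end

section
/- Let X and Y be complex Banach spaces, let (R(t))_{t∈(0,∞)ⁿ} ⊆ L(X,Y) be a strongly continuous operator family, let ν : ℝⁿ → (0,∞) satisfy ν(t) ≥ c for all t ∈ ℝⁿ and some constant c > 0, let w : ℝⁿ → (0,∞) satisfy ν(x+y) ≤ ν(x)w(y) for all x ∈ ℝⁿ and y ∈ [0,∞)ⁿ, and assume ∫_{(0,∞)ⁿ} (1+w(t))‖R(t)‖ dt < ∞. Let R be a nonempty collection of sequences in ℝⁿ, and let 𝒫_X and 𝒫_Y be the metric spaces associated with C_{0,ν}(ℝⁿ : X) and C_{0,ν}(ℝⁿ : Y) respectively. If f : ℝⁿ → X is bounded, continuous and (R,𝒫_X)-multi-almost periodic, then the function F : ℝⁿ → Y given by F(t) := ∫_{-∞}^{t₁} ⋯ ∫_{-∞}^{t_n} R(t−s) f(s) ds = ∫_{[0,∞)ⁿ} R(s) f(t−s) ds is bounded, continuous and (R,𝒫_Y)-multi-almost periodic. -/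
noncomputable section

open Filter MeasureTheory

/-- `(R,𝒫)`-multi-almost periodicity of `f : ℝⁿ → Z`, where `𝒫` is the metric space
associated with `C_{0,ν}(ℝⁿ : Z)` (so that `‖g‖_P = sup_t ‖g(t)‖ ν(t)`): for every
sequence `b ∈ R` there are a subsequence `(b_{k_l})` and a limit function `g` with
`f(·+b_{k_l}) − g ∈ P` for all `l` and `lim_{l→∞} ‖f(·+b_{k_l}) − g‖_P = 0`. -/
def RC0nuAP {n : ℕ} {Z : Type*} [NormedAddCommGroup Z]
    (R : Set (ℕ → EuclideanSpace ℝ (Fin n))) (ν : EuclideanSpace ℝ (Fin n) → ℝ)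
    (f : EuclideanSpace ℝ (Fin n) → Z) : Prop :=
  ∀ b ∈ R, ∃ k : ℕ → ℕ, StrictMono k ∧ ∃ g : EuclideanSpace ℝ (Fin n) → Z,
    (∀ l : ℕ, (fun t => f (t + b (k l)) - g t) ∈ C0nu ν) ∧
    (∀ ε : ℝ, 0 < ε → ∃ N : ℕ, ∀ l ≥ N, ∀ t, ‖f (t + b (k l)) - g t‖ * ν t ≤ ε)

/-!
Write `F(t) = ∫_{s ≥ 0} R(s) f(t - s) ds`. For continuous `h`, Banach–Steinhaus bounds `‖R‖`
uniformly on compact subsets of the open orthant, so `s ↦ R(s) h(s)` is continuous there; this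
gives measurability, and dominated convergence with the majorant `(1 + w)‖R‖` gives boundedness
and continuity of such convolutions. For `s ≥ 0` the weight inequality reads
`ν(t) ≤ ν(t - s) w(s)`, so a weighted bound `‖D‖ ν ≤ B` passes through the convolution as
`‖R ∗ D‖ ν ≤ B ∫ (1 + w)‖R‖`. If `f(· + b_{k_l}) → f*` in the weighted sup norm, then
`F(· + b_{k_l}) - R ∗ f* = R ∗ (f(· + b_{k_l}) - f*)`, which gives the uniform convergence.
The decay at infinity follows by splitting the integral into a ball around `t`, whose
`(1 + w)‖R‖`-mass vanishes as `|t| → ∞`, and its complement, where `D(t - s)` is small.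
-/

open Set Topology

section JointContinuity

variable {𝕜 X Y α : Type*} [NontriviallyNormedField 𝕜]
  [NormedAddCommGroup X] [NormedSpace 𝕜 X] [CompleteSpace X]
  [NormedAddCommGroup Y] [NormedSpace 𝕜 Y] [TopologicalSpace α] [LocallyCompactSpace α]

theorem continuousOn_clm_apply_of_continuousOn_apply {T : α → X →L[𝕜] Y} {h : α → X}
    {U : Set α} (hU : IsOpen U) (hT : ∀ x, ContinuousOn (fun a => T a x) U)
    (hh : ContinuousOn h U) : ContinuousOn (fun a => T a (h a)) U := by
  intro a₀ ha₀
  have hU₀ : U ∈ 𝓝 a₀ := hU.mem_nhds ha₀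
  obtain ⟨C, hC, hCU, hCc⟩ := local_compact_nhds hU₀
  obtain ⟨B, hB⟩ : ∃ B, ∀ a : C, ‖T a‖ ≤ B := banach_steinhaus fun x => by
    obtain ⟨B, hB⟩ := hCc.exists_bound_of_continuousOn ((hT x).mono hCU)
    exact ⟨B, fun a => hB a a.2⟩
  have hsmall : Tendsto (fun a => T a (h a - h a₀)) (𝓝 a₀) (𝓝 0) := by
    refine squeeze_zero_norm' (a := fun a => B * ‖h a - h a₀‖) ?_ ?_
    · filter_upwards [hC] with a ha
      exact (T a).le_of_opNorm_le (hB ⟨a, ha⟩) _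
    · have hcont := ((hh.continuousAt hU₀).sub
        (continuousAt_const : ContinuousAt (fun _ => h a₀) a₀)).norm.const_mul B
      simpa using hcont.tendsto
  have hlim := hsmall.add ((hT (h a₀)).continuousAt hU₀)
  simp only [map_sub, sub_add_cancel, zero_add] at hlim
  exact hlim.mono_left nhdsWithin_le_nhds

end JointContinuity

namespace EuclideanSpace

variable {ι : Type*} [Fintype ι]

theorem isOpen_setOf_forall_pos : IsOpen {s : EuclideanSpace ℝ ι | ∀ i, 0 < s i} := by
  simp only [ofPred_forall]
  exact isOpen_iInter_of_finite fun i => isOpen_lt continuous_const (by fun_prop)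

theorem measurableSet_setOf_forall_nonneg :
    MeasurableSet {s : EuclideanSpace ℝ ι | ∀ i, 0 ≤ s i} := by
  simp only [ofPred_forall]
  exact (isClosed_iInter fun i => isClosed_le continuous_const (by fun_prop)).measurableSet

theorem setOf_forall_nonneg_ae_eq_setOf_forall_pos :
    {s : EuclideanSpace ℝ ι | ∀ i, 0 ≤ s i} =ᵐ[volume] {s | ∀ i, 0 < s i} := by
  have h := (PiLp.volume_preserving_ofLp ι).quasiMeasurePreserving.preimage_ae_eq
    (Measure.pi_Ioi_ae_eq_pi_Ici (μ := fun _ : ι => (volume : Measure ℝ)) (s := univ)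
      (f := fun _ => 0)).symm
  simpa [Set.preimage, Set.pi] using h

variable {𝕜 X Y : Type*} [NontriviallyNormedField 𝕜]
  [NormedAddCommGroup X] [NormedSpace 𝕜 X] [CompleteSpace X]
  [NormedAddCommGroup Y] [NormedSpace 𝕜 Y]

theorem aestronglyMeasurable_clm_apply_restrict_setOf_forall_nonneg
    {T : EuclideanSpace ℝ ι → X →L[𝕜] Y}
    (hT : ∀ x, ContinuousOn (fun t => T t x) {t | ∀ i, 0 < t i})
    {h : EuclideanSpace ℝ ι → X} (hh : Continuous h) :
    AEStronglyMeasurable (fun s => T s (h s)) (volume.restrict {s | ∀ i, 0 ≤ s i}) := by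
  rw [Measure.restrict_congr_set setOf_forall_nonneg_ae_eq_setOf_forall_pos]
  exact (continuousOn_clm_apply_of_continuousOn_apply isOpen_setOf_forall_pos hT
    hh.continuousOn).aestronglyMeasurable isOpen_setOf_forall_pos.measurableSet

end EuclideanSpace

theorem tendsto_setIntegral_ball_comap_norm_atTop {E : Type*} [NormedAddCommGroup E]
    [MeasurableSpace E] [OpensMeasurableSpace E] {μ : Measure E} {g : E → ℝ}
    (hg : Integrable g μ) (A : ℝ) :
    Tendsto (fun t => ∫ s in Metric.ball t A, g s ∂μ) (comap norm atTop) (𝓝 0) := by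
  simp_rw [← integral_indicator Metric.isOpen_ball.measurableSet]
  have hlim := tendsto_integral_filter_of_dominated_convergence (fun s => ‖g s‖)
    (l := comap norm atTop) (F := fun t s => (Metric.ball t A).indicator g s) (f := 0)
    (Eventually.of_forall fun t => hg.aestronglyMeasurable.indicator
      Metric.isOpen_ball.measurableSet)
    (Eventually.of_forall fun t => ae_of_all _ fun s => norm_indicator_le_norm_self _ _)
    hg.norm (ae_of_all _ fun s => ?_)
  · simpa using hlim
  refine tendsto_const_nhds.congr' ?_
  filter_upwards [tendsto_comap.eventually (eventually_ge_atTop (A + ‖s‖))] with t ht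
  refine (indicator_of_notMem (fun hs => ?_) _).symm
  rw [Metric.mem_ball, dist_eq_norm] at hs
  linarith [norm_sub_norm_le t s, norm_sub_rev s t]

section KernelConv

variable {𝕜 X Y : Type*} [NontriviallyNormedField 𝕜]
  [NormedAddCommGroup X] [NormedSpace 𝕜 X] [NormedAddCommGroup Y] [NormedSpace 𝕜 Y]

theorem integrableOn_clm_apply {α : Type*} [MeasurableSpace α] {μ : Measure α} {K : Set α}
    {T : α → X →L[𝕜] Y} {q : α → ℝ} {h : α → X} {M : ℝ}
    (hmeas : AEStronglyMeasurable (fun s => T s (h s)) (μ.restrict K))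
    (hq : IntegrableOn q K μ) (hTq : ∀ s, ‖T s‖ ≤ q s) (hM : ∀ s, ‖h s‖ ≤ M) :
    IntegrableOn (fun s => T s (h s)) K μ :=
  (hq.mul_const M).mono' hmeas
    (ae_of_all _ fun s => (T s).le_of_opNorm_le_of_le (hTq s) (hM s))

theorem norm_clm_apply_mul_weight_le {E : Type*} [AddGroup E] {K : Set E}
    {T : E → X →L[𝕜] Y} {q ν w : E → ℝ} (hν : ∀ t, 0 ≤ ν t)
    (hsub : ∀ x, ∀ y ∈ K, ν (x + y) ≤ ν x * w y) (hwq : ∀ s, w s * ‖T s‖ ≤ q s)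
    (D : E → X) (t : E) {s : E} (hs : s ∈ K) :
    ‖T s (D (t - s))‖ * ν t ≤ q s * (‖D (t - s)‖ * ν (t - s)) := by
  have hνt : ν t ≤ ν (t - s) * w s := by simpa using hsub (t - s) s hs
  have hνts := hν (t - s)
  calc ‖T s (D (t - s))‖ * ν t ≤ ‖T s‖ * ‖D (t - s)‖ * (ν (t - s) * w s) :=
        mul_le_mul ((T s).le_opNorm _) hνt (hν t) (by positivity)
    _ = w s * ‖T s‖ * (‖D (t - s)‖ * ν (t - s)) := by ring
    _ ≤ q s * (‖D (t - s)‖ * ν (t - s)) := by gcongr; exact hwq s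

variable {E : Type*} [NormedAddCommGroup E] [MeasurableSpace E] [NormedSpace ℝ Y]
  {μ : Measure E} {K : Set E} {T : E → X →L[𝕜] Y} {q ν w : E → ℝ} {h D : E → X} {M : ℝ}

def kernelConv (μ : Measure E) (K : Set E) (T : E → X →L[𝕜] Y) (h : E → X) (t : E) : Y :=
  ∫ s in K, T s (h (t - s)) ∂μ

theorem kernelConv_add_right (h : E → X) (t β : E) :
    kernelConv μ K T h (t + β) = kernelConv μ K T (fun u => h (u + β)) t := by
  simp only [kernelConv, add_sub_right_comm]

theorem kernelConv_sub_kernelConv {h₁ h₂ : E → X} {t : E}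
    (hi₁ : IntegrableOn (fun s => T s (h₁ (t - s))) K μ)
    (hi₂ : IntegrableOn (fun s => T s (h₂ (t - s))) K μ) :
    kernelConv μ K T h₁ t - kernelConv μ K T h₂ t = kernelConv μ K T (h₁ - h₂) t := by
  simp only [kernelConv, ← integral_sub hi₁ hi₂, Pi.sub_apply, map_sub]

theorem norm_kernelConv_le (hq : IntegrableOn q K μ) (hTq : ∀ s, ‖T s‖ ≤ q s)
    (hM : ∀ u, ‖h u‖ ≤ M) (t : E) :
    ‖kernelConv μ K T h t‖ ≤ (∫ s in K, q s ∂μ) * M := by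
  rw [← integral_mul_const]
  exact norm_integral_le_of_norm_le (hq.mul_const M)
    (ae_of_all _ fun s => (T s).le_of_opNorm_le_of_le (hTq s) (hM _))

theorem continuous_kernelConv
    (hmeas : ∀ h : E → X, Continuous h →
      AEStronglyMeasurable (fun s => T s (h s)) (μ.restrict K))
    (hq : IntegrableOn q K μ) (hTq : ∀ s, ‖T s‖ ≤ q s) (hh : Continuous h)
    (hM : ∀ u, ‖h u‖ ≤ M) : Continuous (kernelConv μ K T h) := by
  refine continuous_iff_continuousAt.2 fun t₀ => continuousAt_of_dominated
    (bound := fun s => q s * M) ?_ ?_ (hq.mul_const M) (ae_of_all _ fun s => ?_)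
  · exact Eventually.of_forall fun t => hmeas (fun s => h (t - s)) (by fun_prop)
  · exact Eventually.of_forall fun t =>
      ae_of_all _ fun s => (T s).le_of_opNorm_le_of_le (hTq s) (hM _)
  · exact ((T s).continuous.comp (hh.comp (continuous_sub_right s))).continuousAt

theorem norm_kernelConv_mul_le_setIntegral (hK : MeasurableSet K) {c : ℝ} (hc : 0 ≤ c)
    {ρ : E → ℝ} (hρ : IntegrableOn ρ K μ) {t : E}
    (hle : ∀ s ∈ K, ‖T s (D (t - s))‖ * c ≤ ρ s) :
    ‖kernelConv μ K T D t‖ * c ≤ ∫ s in K, ρ s ∂μ := by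
  have hnorm : ∀ y : Y, ‖c • y‖ = ‖y‖ * c := fun y => by
    rw [norm_smul, Real.norm_of_nonneg hc, mul_comm]
  rw [kernelConv, ← hnorm, ← integral_smul]
  refine norm_integral_le_of_norm_le hρ ((ae_restrict_iff' hK).2 (ae_of_all _ fun s hs => ?_))
  rw [hnorm]
  exact hle s hs

theorem norm_kernelConv_mul_weight_le (hK : MeasurableSet K) (hq : IntegrableOn q K μ)
    (hTq : ∀ s, ‖T s‖ ≤ q s) (hν : ∀ t, 0 ≤ ν t)
    (hsub : ∀ x, ∀ y ∈ K, ν (x + y) ≤ ν x * w y) (hwq : ∀ s, w s * ‖T s‖ ≤ q s)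
    {B : ℝ} (hB : ∀ u, ‖D u‖ * ν u ≤ B) (t : E) :
    ‖kernelConv μ K T D t‖ * ν t ≤ (∫ s in K, q s ∂μ) * B := by
  rw [← integral_mul_const]
  refine norm_kernelConv_mul_le_setIntegral hK (hν t) (hq.mul_const B) fun s hs => ?_
  exact (norm_clm_apply_mul_weight_le hν hsub hwq D t hs).trans
    (mul_le_mul_of_nonneg_left (hB _) ((norm_nonneg _).trans (hTq s)))

theorem tendsto_norm_kernelConv_mul_weight [OpensMeasurableSpace E] (hK : MeasurableSet K)
    (hq : IntegrableOn q K μ)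
    (hTq : ∀ s, ‖T s‖ ≤ q s) (hν : ∀ t, 0 ≤ ν t)
    (hsub : ∀ x, ∀ y ∈ K, ν (x + y) ≤ ν x * w y) (hwq : ∀ s, w s * ‖T s‖ ≤ q s)
    {B : ℝ} (hB : ∀ u, ‖D u‖ * ν u ≤ B)
    (hD : Tendsto (fun u => ‖D u‖ * ν u) (comap norm atTop) (𝓝 0)) :
    Tendsto (fun t => ‖kernelConv μ K T D t‖ * ν t) (comap norm atTop) (𝓝 0) := by
  set I := ∫ s in K, q s ∂μ
  have hq0 : ∀ s, 0 ≤ q s := fun s => (norm_nonneg _).trans (hTq s)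
  have hI : 0 ≤ I := integral_nonneg hq0
  refine tendsto_order.2 ⟨fun a ha => Eventually.of_forall fun t =>
    ha.trans_le (mul_nonneg (norm_nonneg _) (hν t)), fun ε hε => ?_⟩
  set η := ε / (2 * (I + 1))
  have hη : 0 < η := by positivity
  have hηI : η * I < ε := by
    rw [div_mul_eq_mul_div, div_lt_iff₀ (by positivity)]
    nlinarith
  obtain ⟨A, hA⟩ := eventually_atTop.1 (eventually_comap.1 (hD.eventually (ge_mem_nhds hη)))
  have hlim : Tendsto (fun t => η * I + B * ∫ s in Metric.ball t A, q s ∂μ.restrict K)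
      (comap norm atTop) (𝓝 (η * I)) := by
    simpa using ((tendsto_setIntegral_ball_comap_norm_atTop hq A).const_mul B).const_add (η * I)
  filter_upwards [hlim.eventually (gt_mem_nhds hηI)] with t ht
  refine lt_of_le_of_lt ?_ ht
  have hbound : ∀ s ∈ K, ‖T s (D (t - s))‖ * ν t
      ≤ q s * η + (Metric.ball t A).indicator (fun s => B * q s) s := by
    intro s hs
    refine (norm_clm_apply_mul_weight_le hν hsub hwq D t hs).trans ?_
    by_cases hst : s ∈ Metric.ball t A
    · rw [indicator_of_mem hst]
      nlinarith [hB (t - s), hq0 s]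
    · rw [indicator_of_notMem hst, add_zero]
      rw [Metric.mem_ball, dist_eq_norm, not_lt, norm_sub_rev] at hst
      exact mul_le_mul_of_nonneg_left (hA _ hst _ rfl) (hq0 s)
  calc ‖kernelConv μ K T D t‖ * ν t
      ≤ ∫ s in K, (q s * η + (Metric.ball t A).indicator (fun s => B * q s) s) ∂μ :=
        norm_kernelConv_mul_le_setIntegral hK (hν t)
          ((hq.mul_const η).add ((hq.const_mul B).indicator Metric.isOpen_ball.measurableSet))
          hbound
    _ = η * I + B * ∫ s in Metric.ball t A, q s ∂μ.restrict K := by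
        rw [integral_add (hq.mul_const η)
          ((hq.const_mul B).indicator Metric.isOpen_ball.measurableSet), integral_mul_const,
          integral_indicator Metric.isOpen_ball.measurableSet, integral_const_mul, mul_comm]

end KernelConv

section AlmostPeriodic

variable {𝕜 X Y : Type*} [NontriviallyNormedField 𝕜]
  [NormedAddCommGroup X] [NormedSpace 𝕜 X] [NormedAddCommGroup Y] [NormedSpace 𝕜 Y]
  [NormedSpace ℝ Y] {n : ℕ} {μ : Measure (EuclideanSpace ℝ (Fin n))}
  {K : Set (EuclideanSpace ℝ (Fin n))} {T : EuclideanSpace ℝ (Fin n) → X →L[𝕜] Y}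
  {q ν w : EuclideanSpace ℝ (Fin n) → ℝ}

theorem rc0nuAP_kernelConv (hK : MeasurableSet K)
    (hmeas : ∀ h : EuclideanSpace ℝ (Fin n) → X, Continuous h →
      AEStronglyMeasurable (fun s => T s (h s)) (μ.restrict K))
    (hq : IntegrableOn q K μ) (hTq : ∀ s, ‖T s‖ ≤ q s) {c : ℝ} (hc : 0 < c)
    (hνc : ∀ t, c ≤ ν t) (hsub : ∀ x, ∀ y ∈ K, ν (x + y) ≤ ν x * w y)
    (hwq : ∀ s, w s * ‖T s‖ ≤ q s) {R : Set (ℕ → EuclideanSpace ℝ (Fin n))}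
    {f : EuclideanSpace ℝ (Fin n) → X} {M : ℝ} (hfb : ∀ t, ‖f t‖ ≤ M) (hfc : Continuous f)
    (hfap : RC0nuAP R ν f) : RC0nuAP R ν (kernelConv μ K T f) := by
  have hν : ∀ t, 0 ≤ ν t := fun t => hc.le.trans (hνc t)
  intro b hb
  obtain ⟨k, hk, g, hg_mem, hg_lim⟩ := hfap b hb
  obtain ⟨N₀, hN₀⟩ := hg_lim 1 one_pos
  set D : ℕ → EuclideanSpace ℝ (Fin n) → X := fun l t => f (t + b (k (l + N₀))) - g t
  have hD : ∀ l u, ‖D l u‖ * ν u ≤ 1 := fun l => hN₀ (l + N₀) (Nat.le_add_left _ _)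
  have hgc : Continuous g := by
    refine ((hfc.comp (continuous_add_const (b (k N₀)))).sub (hg_mem N₀).1).congr fun t => ?_
    simp
  have hgb : ∀ t, ‖g t‖ ≤ M + 1 / c := fun t => calc
    ‖g t‖ = ‖f (t + b (k N₀)) - D 0 t‖ := by simp [D]
    _ ≤ ‖f (t + b (k N₀))‖ + ‖D 0 t‖ := norm_sub_le _ _
    _ ≤ M + 1 / c := add_le_add (hfb _) ((le_div_iff₀ hc).2
        ((mul_le_mul_of_nonneg_left (hνc t) (norm_nonneg _)).trans (hD 0 t)))
  have hconv_sub : ∀ l t, kernelConv μ K T f (t + b (k (l + N₀))) - kernelConv μ K T g t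
      = kernelConv μ K T (D l) t := fun l t => by
    rw [kernelConv_add_right, kernelConv_sub_kernelConv (h₁ := fun u => f (u + b (k (l + N₀))))
      (integrableOn_clm_apply (hmeas _ (by fun_prop)) hq hTq fun s => hfb _)
      (integrableOn_clm_apply (hmeas _ (by fun_prop)) hq hTq fun s => hgb _)]
    rfl
  refine ⟨fun l => k (l + N₀), hk.comp (strictMono_id.add_const N₀), kernelConv μ K T g,
    fun l => ⟨?_, ?_⟩, fun ε hε => ?_⟩
  · exact ((continuous_kernelConv hmeas hq hTq hfc hfb).comp (continuous_add_const _)).sub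
      (continuous_kernelConv hmeas hq hTq hgc hgb)
  · simpa only [hconv_sub] using
      tendsto_norm_kernelConv_mul_weight hK hq hTq hν hsub hwq (hD l) (hg_mem _).2
  · set I := ∫ s in K, q s ∂μ
    have hI : 0 ≤ I := integral_nonneg fun s => (norm_nonneg _).trans (hTq s)
    obtain ⟨N, hN⟩ := hg_lim (ε / (I + 1)) (by positivity)
    refine ⟨N, fun l hl t => ?_⟩
    rw [hconv_sub]
    refine (norm_kernelConv_mul_weight_le hK hq hTq hν hsub hwq
      (fun u => hN (l + N₀) (by omega) u) t).trans ?_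
    rw [mul_div_assoc', div_le_iff₀ (by positivity)]
    nlinarith

end AlmostPeriodic

theorem stmt2_general {n : ℕ} {X Y : Type*}
    [NormedAddCommGroup X] [NormedSpace ℂ X] [CompleteSpace X]
    [NormedAddCommGroup Y] [NormedSpace ℂ Y] [CompleteSpace Y]
    (T : EuclideanSpace ℝ (Fin n) → (X →L[ℂ] Y))
    (hTcont : ∀ x : X, ContinuousOn (fun t => T t x)
      {t : EuclideanSpace ℝ (Fin n) | ∀ i, 0 < t i})
    (ν : EuclideanSpace ℝ (Fin n) → ℝ)
    (c : ℝ) (hc : 0 < c) (hνc : ∀ t, c ≤ ν t)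
    (w : EuclideanSpace ℝ (Fin n) → ℝ) (hw : ∀ t, 0 < w t)
    (hsub : ∀ x y : EuclideanSpace ℝ (Fin n), (∀ i, 0 ≤ y i) → ν (x + y) ≤ ν x * w y)
    (hint : MeasureTheory.IntegrableOn
      (fun t => (1 + w t) * ‖T t‖) {t : EuclideanSpace ℝ (Fin n) | ∀ i, 0 < t i})
    (R : Set (ℕ → EuclideanSpace ℝ (Fin n)))
    (f : EuclideanSpace ℝ (Fin n) → X)
    (hfb : ∃ M : ℝ, ∀ t, ‖f t‖ ≤ M) (hfc : Continuous f)
    (hfap : RC0nuAP R ν f)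
    (F : EuclideanSpace ℝ (Fin n) → Y)
    (hFdef : ∀ t, F t =
      ∫ s in {s : EuclideanSpace ℝ (Fin n) | ∀ i, 0 ≤ s i}, T s (f (t - s))) :
    (∃ M : ℝ, ∀ t, ‖F t‖ ≤ M) ∧ Continuous F ∧ RC0nuAP R ν F := by
  obtain ⟨M, hM⟩ := hfb
  obtain rfl : F = kernelConv volume {s | ∀ i, 0 ≤ s i} T f := funext hFdef
  have hK := EuclideanSpace.measurableSet_setOf_forall_nonneg (ι := Fin n)
  have hq : IntegrableOn (fun t => (1 + w t) * ‖T t‖) {s | ∀ i, 0 ≤ s i} :=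
    hint.congr_set_ae EuclideanSpace.setOf_forall_nonneg_ae_eq_setOf_forall_pos
  have hTq : ∀ s, ‖T s‖ ≤ (1 + w s) * ‖T s‖ := fun s =>
    le_mul_of_one_le_left (norm_nonneg _) (by linarith [hw s])
  have hwq : ∀ s, w s * ‖T s‖ ≤ (1 + w s) * ‖T s‖ := fun s =>
    mul_le_mul_of_nonneg_right (by linarith) (norm_nonneg _)
  have hmeas := fun h (hh : Continuous h) =>
    EuclideanSpace.aestronglyMeasurable_clm_apply_restrict_setOf_forall_nonneg hTcont hh
  exact ⟨⟨_, norm_kernelConv_le hq hTq hM⟩, continuous_kernelConv hmeas hq hTq hfc hM,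
    rc0nuAP_kernelConv hK hmeas hq hTq hc hνc hsub hwq hM hfc hfap⟩

/-- Invariance of `(R,𝒫)`-multi-almost periodicity under the action of the infinite
convolution product `F(t) = ∫_{[0,∞)ⁿ} R(s) f(t−s) ds`. -/
theorem stmt2 {n : ℕ} {X Y : Type*}
    [NormedAddCommGroup X] [NormedSpace ℂ X] [CompleteSpace X]
    [NormedAddCommGroup Y] [NormedSpace ℂ Y] [CompleteSpace Y]
    (T : EuclideanSpace ℝ (Fin n) → (X →L[ℂ] Y))
    (hTcont : ∀ x : X, ContinuousOn (fun t => T t x)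
      {t : EuclideanSpace ℝ (Fin n) | ∀ i, 0 < t i})
    (ν : EuclideanSpace ℝ (Fin n) → ℝ)
    (c : ℝ) (hc : 0 < c) (hνc : ∀ t, c ≤ ν t)
    (w : EuclideanSpace ℝ (Fin n) → ℝ) (hw : ∀ t, 0 < w t)
    (hsub : ∀ x y : EuclideanSpace ℝ (Fin n), (∀ i, 0 ≤ y i) → ν (x + y) ≤ ν x * w y)
    (hint : MeasureTheory.IntegrableOn
      (fun t => (1 + w t) * ‖T t‖) {t : EuclideanSpace ℝ (Fin n) | ∀ i, 0 < t i})
    (R : Set (ℕ → EuclideanSpace ℝ (Fin n))) (hRne : R.Nonempty)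
    (f : EuclideanSpace ℝ (Fin n) → X)
    (hfb : ∃ M : ℝ, ∀ t, ‖f t‖ ≤ M) (hfc : Continuous f)
    (hfap : RC0nuAP R ν f)
    (F : EuclideanSpace ℝ (Fin n) → Y)
    (hFdef : ∀ t, F t =
      ∫ s in {s : EuclideanSpace ℝ (Fin n) | ∀ i, 0 ≤ s i}, T s (f (t - s))) :
    (∃ M : ℝ, ∀ t, ‖F t‖ ≤ M) ∧ Continuous F ∧ RC0nuAP R ν F :=
  stmt2_general T hTcont ν c hc hνc w hw hsub hint R f hfb hfc hfap F hFdef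
end
end

section
/- Let X and Y be complex Banach spaces, let (R(t))_{t∈(0,∞)ⁿ} ⊆ L(X,Y) be a strongly continuous operator family, let c ∈ ℂ \ {0}, let ∅ ≠ I' ⊆ ℝⁿ, let ν : ℝⁿ → (0,∞) be a function such that 1/ν is locally bounded, let w : ℝⁿ → (0,∞) satisfy ν(x+y) ≤ ν(x)w(y) for all x ∈ ℝⁿ and y ∈ [0,∞)ⁿ, and assume ∫_{(0,∞)ⁿ} (1+w(t))‖R(t)‖ dt < ∞. Let 𝒫_X and 𝒫_Y be the metric spaces associated with C_{0,ν}(ℝⁿ : X) and C_{0,ν}(ℝⁿ : Y) respectively. If f : ℝⁿ → X is bounded, continuous and Bohr (I',c,𝒫_X)-almost periodic, then the function F : ℝⁿ → Y given by F(t) := ∫_{[0,∞)ⁿ} R(s) f(t−s) ds is bounded, continuous and Bohr (I',c,𝒫_Y)-almost periodic. -/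
/-!
For `s ∈ [0,∞)ⁿ` the weight inequality gives `ν(t) ≤ ν(t - s) w(s)`, hence
`‖R(s) g(t - s)‖ ν(t) ≤ w(s) ‖R(s)‖ · ‖g(t - s)‖ ν(t - s)`. By linearity `F(· + τ) - c F` is the
convolution of `R` with `g = f(· + τ) - c f`, so integrating this bound turns an `ε`-almost period
of `f` into a `(∫ (1 + w) ‖R‖) ε`-almost period of `F`, and dominated convergence carries the
decay of `‖g(t)‖ ν(t)` at infinity over to `F(· + τ) - c F`. The integrands are measurable because
Banach–Steinhaus makes `‖R‖` locally bounded on `(0,∞)ⁿ`, so that `s ↦ R(s) h(s)` is continuous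
there for continuous `h`, while the boundary of `[0,∞)ⁿ` is null.
-/

noncomputable section

open Filter MeasureTheory

/-- Bohr `(I',c,𝒫)`-almost periodicity of `F : ℝⁿ → Z`, where `𝒫` is the metric space
associated with `C_{0,ν}(ℝⁿ : Z)` (so that `‖g‖_P = sup_t ‖g(t)‖ ν(t)`). -/
def BohrIcC0nuAP {n : ℕ} {Z : Type*} [NormedAddCommGroup Z] [NormedSpace ℂ Z]
    (I' : Set (EuclideanSpace ℝ (Fin n))) (c : ℂ) (ν : EuclideanSpace ℝ (Fin n) → ℝ)
    (F : EuclideanSpace ℝ (Fin n) → Z) : Prop :=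
  ∀ ε : ℝ, 0 < ε → ∃ l : ℝ, 0 < l ∧ ∀ t₀ ∈ I', ∃ τ ∈ I', ‖τ - t₀‖ ≤ l ∧
    (fun t => F (t + τ) - c • F t) ∈ C0nu ν ∧
    ∀ t, ‖F (t + τ) - c • F t‖ * ν t ≤ ε

open Topology

section StronglyContinuous

variable {α 𝕜 X Y : Type*} [TopologicalSpace α] [NontriviallyNormedField 𝕜]
  [NormedAddCommGroup X] [NormedSpace 𝕜 X] [CompleteSpace X]
  [NormedAddCommGroup Y] [NormedSpace 𝕜 Y] {T : α → X →L[𝕜] Y} {U : Set α}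

lemma exists_eventually_opNorm_le_of_continuousOn_apply [LocallyCompactSpace α]
    (hT : ∀ x, ContinuousOn (fun a => T a x) U) {a₀ : α} (hU : U ∈ 𝓝 a₀) :
    ∃ C, ∀ᶠ a in 𝓝 a₀, ‖T a‖ ≤ C := by
  obtain ⟨K, hK, hKU, hKc⟩ := LocallyCompactSpace.local_compact_nhds a₀ U hU
  have hpointwise : ∀ x, ∃ C, ∀ a : K, ‖T a x‖ ≤ C := fun x =>
    (hKc.exists_bound_of_continuousOn ((hT x).mono hKU)).imp fun _ hC a => hC a a.2
  obtain ⟨C, hC⟩ := banach_steinhaus hpointwise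
  exact ⟨C, eventually_of_mem hK fun a ha => hC ⟨a, ha⟩⟩

lemma ContinuousOn.clm_apply_of_continuousOn_apply [LocallyCompactSpace α]
    (hT : ∀ x, ContinuousOn (fun a => T a x) U) (hU : IsOpen U) {h : α → X}
    (hh : ContinuousOn h U) : ContinuousOn (fun a => T a (h a)) U := by
  intro a₀ ha₀
  obtain ⟨C, hC⟩ := exists_eventually_opNorm_le_of_continuousOn_apply hT (hU.mem_nhds ha₀)
  -- `T a (h a) = T a (h a - h a₀) + T a (h a₀)`, and the first term is `O(‖h a - h a₀‖)`.
  have hsmall : Tendsto (fun a => T a (h a - h a₀)) (𝓝[U] a₀) (𝓝 0) := by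
    refine squeeze_zero_norm' ?_ (by simpa using ((hh a₀ ha₀).sub_const (h a₀)).norm.const_mul C)
    filter_upwards [nhdsWithin_le_nhds hC] with a ha
    exact (T a).le_of_opNorm_le ha _
  simpa [ContinuousWithinAt] using hsmall.add (hT (h a₀) a₀ ha₀)

end StronglyContinuous

section Orthant

variable {ι : Type*} {X Y : Type*} [NormedAddCommGroup X] [NormedSpace ℂ X]
  [NormedAddCommGroup Y] [NormedSpace ℂ Y] {T : EuclideanSpace ℝ ι → X →L[ℂ] Y}
  {B ν w : EuclideanSpace ℝ ι → ℝ} {g : EuclideanSpace ℝ ι → X}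

lemma norm_apply_mul_le_weight_mul (hν : ∀ t, 0 ≤ ν t)
    (hsub : ∀ x y : EuclideanSpace ℝ ι, (∀ i, 0 ≤ y i) → ν (x + y) ≤ ν x * w y)
    {s : EuclideanSpace ℝ ι} (hs : ∀ i, 0 ≤ s i) (t : EuclideanSpace ℝ ι) :
    ‖T s (g (t - s))‖ * ν t ≤ w s * ‖T s‖ * (‖g (t - s)‖ * ν (t - s)) := by
  have hνt : ν t ≤ ν (t - s) * w s := by simpa using hsub (t - s) s hs
  calc ‖T s (g (t - s))‖ * ν t ≤ (‖T s‖ * ‖g (t - s)‖) * (ν (t - s) * w s) :=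
        mul_le_mul ((T s).le_opNorm _) hνt (hν t) (by positivity)
    _ = w s * ‖T s‖ * (‖g (t - s)‖ * ν (t - s)) := by ring

lemma norm_apply_mul_le_of_forall_norm_mul_le (hν : ∀ t, 0 ≤ ν t)
    (hsub : ∀ x y : EuclideanSpace ℝ ι, (∀ i, 0 ≤ y i) → ν (x + y) ≤ ν x * w y)
    (hw : ∀ s, 0 ≤ w s) (hwTB : ∀ s, w s * ‖T s‖ ≤ B s) {ε : ℝ}
    (hε : ∀ t, ‖g t‖ * ν t ≤ ε) {s : EuclideanSpace ℝ ι} (hs : ∀ i, 0 ≤ s i)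
    (t : EuclideanSpace ℝ ι) :
    ‖T s (g (t - s))‖ * ν t ≤ B s * ε := by
  calc ‖T s (g (t - s))‖ * ν t ≤ w s * ‖T s‖ * (‖g (t - s)‖ * ν (t - s)) :=
        norm_apply_mul_le_weight_mul hν hsub hs t
    _ ≤ B s * ε := mul_le_mul (hwTB s) (hε _) (mul_nonneg (norm_nonneg _) (hν _))
        ((mul_nonneg (hw s) (norm_nonneg _)).trans (hwTB s))

variable [Fintype ι]

lemma setOf_forall_pos_ae_eq_setOf_forall_nonneg :
    {t : EuclideanSpace ℝ ι | ∀ i, 0 < t i} =ᵐ[volume] {t | ∀ i, 0 ≤ t i} := by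
  have hpos : {t : EuclideanSpace ℝ ι | ∀ i, 0 < t i} =
      WithLp.ofLp ⁻¹' Set.univ.pi fun _ => Set.Ioi 0 := by ext; simp
  have hnonneg : {t : EuclideanSpace ℝ ι | ∀ i, 0 ≤ t i} = WithLp.ofLp ⁻¹' Set.Ici 0 := by
    ext; simp [Pi.le_def]
  rw [hpos, hnonneg]
  exact (PiLp.volume_preserving_ofLp ι).quasiMeasurePreserving.preimage_ae_eq
    (Measure.univ_pi_Ioi_ae_eq_Ici (f := 0))

lemma measurableSet_setOf_forall_nonneg :
    MeasurableSet {t : EuclideanSpace ℝ ι | ∀ i, 0 ≤ t i} := by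
  simp only [Set.ofPred_forall]
  exact MeasurableSet.iInter fun i => measurableSet_le measurable_const (by fun_prop)

lemma isOpen_setOf_forall_pos : IsOpen {t : EuclideanSpace ℝ ι | ∀ i, 0 < t i} := by
  simp only [Set.ofPred_forall]
  exact isOpen_iInter_of_finite fun i => isOpen_lt continuous_const (PiLp.continuous_apply 2 _ i)

lemma aestronglyMeasurable_apply_of_continuousOn_apply [CompleteSpace X]
    (hT : ∀ x, ContinuousOn (fun s => T s x) {s | ∀ i, 0 < s i})
    {h : EuclideanSpace ℝ ι → X} (hh : Continuous h) :
    AEStronglyMeasurable (fun s => T s (h s)) (volume.restrict {s | ∀ i, 0 ≤ s i}) := by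
  rw [Measure.restrict_congr_set setOf_forall_pos_ae_eq_setOf_forall_nonneg.symm]
  exact (hh.continuousOn.clm_apply_of_continuousOn_apply hT isOpen_setOf_forall_pos
    ).aestronglyMeasurable isOpen_setOf_forall_pos.measurableSet

noncomputable def orthantConv (T : EuclideanSpace ℝ ι → X →L[ℂ] Y) (h : EuclideanSpace ℝ ι → X)
    (t : EuclideanSpace ℝ ι) : Y :=
  ∫ s in {s : EuclideanSpace ℝ ι | ∀ i, 0 ≤ s i}, T s (h (t - s))

lemma integrableOn_apply_of_norm_le [CompleteSpace X]
    (hT : ∀ x, ContinuousOn (fun s => T s x) {s | ∀ i, 0 < s i})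
    (hB : IntegrableOn B {s | ∀ i, 0 ≤ s i}) (hTB : ∀ s, ‖T s‖ ≤ B s)
    {h : EuclideanSpace ℝ ι → X} {M : ℝ} (hh : Continuous h) (hM : ∀ t, ‖h t‖ ≤ M) :
    IntegrableOn (fun s => T s (h s)) {s | ∀ i, 0 ≤ s i} :=
  (hB.mul_const M).mono' (aestronglyMeasurable_apply_of_continuousOn_apply hT hh)
    (ae_of_all _ fun s => (T s).le_of_opNorm_le_of_le (hTB s) (hM s))

lemma norm_orthantConv_le (hB : IntegrableOn B {s | ∀ i, 0 ≤ s i}) (hTB : ∀ s, ‖T s‖ ≤ B s)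
    {h : EuclideanSpace ℝ ι → X} {M : ℝ} (hM : ∀ t, ‖h t‖ ≤ M) (t : EuclideanSpace ℝ ι) :
    ‖orthantConv T h t‖ ≤ (∫ s in {s | ∀ i, 0 ≤ s i}, B s) * M := by
  rw [← integral_mul_const]
  exact norm_integral_le_of_norm_le (hB.mul_const M)
    (ae_of_all _ fun s => (T s).le_of_opNorm_le_of_le (hTB s) (hM _))

lemma continuous_orthantConv [CompleteSpace X]
    (hT : ∀ x, ContinuousOn (fun s => T s x) {s | ∀ i, 0 < s i})
    (hB : IntegrableOn B {s | ∀ i, 0 ≤ s i}) (hTB : ∀ s, ‖T s‖ ≤ B s)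
    {h : EuclideanSpace ℝ ι → X} {M : ℝ} (hh : Continuous h) (hM : ∀ t, ‖h t‖ ≤ M) :
    Continuous (orthantConv T h) :=
  continuous_of_dominated
    (fun t => aestronglyMeasurable_apply_of_continuousOn_apply hT
      (hh.comp (continuous_sub_left t)))
    (fun _ => ae_of_all _ fun s => (T s).le_of_opNorm_le_of_le (hTB s) (hM _))
    (hB.mul_const M)
    (ae_of_all _ fun s => (T s).continuous.comp (hh.comp (continuous_sub_right s)))

lemma orthantConv_comp_add_sub_smul [CompleteSpace X]
    (hT : ∀ x, ContinuousOn (fun s => T s x) {s | ∀ i, 0 < s i})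
    (hB : IntegrableOn B {s | ∀ i, 0 ≤ s i}) (hTB : ∀ s, ‖T s‖ ≤ B s)
    {h : EuclideanSpace ℝ ι → X} {M : ℝ} (hh : Continuous h) (hM : ∀ t, ‖h t‖ ≤ M)
    (τ : EuclideanSpace ℝ ι) (c : ℂ) (t : EuclideanSpace ℝ ι) :
    orthantConv T (fun t => h (t + τ) - c • h t) t =
      orthantConv T h (t + τ) - c • orthantConv T h t := by
  have hint : ∀ t, IntegrableOn (fun s => T s (h (t - s))) {s | ∀ i, 0 ≤ s i} := fun t =>
    integrableOn_apply_of_norm_le hT hB hTB (hh.comp (continuous_sub_left t)) fun _ => hM _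
  simp only [orthantConv, ← integral_smul, map_sub, map_smul, sub_add_eq_add_sub]
  exact integral_sub (hint _) ((hint t).smul c)

lemma norm_orthantConv_mul_le_integral (hν : ∀ t, 0 ≤ ν t) (t : EuclideanSpace ℝ ι) :
    ‖orthantConv T g t‖ * ν t ≤ ∫ s in {s | ∀ i, 0 ≤ s i}, ‖T s (g (t - s))‖ * ν t := by
  rw [integral_mul_const]
  exact mul_le_mul_of_nonneg_right (norm_integral_le_integral_norm _) (hν t)

lemma norm_orthantConv_mul_le (hν : ∀ t, 0 ≤ ν t)
    (hsub : ∀ x y : EuclideanSpace ℝ ι, (∀ i, 0 ≤ y i) → ν (x + y) ≤ ν x * w y)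
    (hw : ∀ s, 0 ≤ w s) (hB : IntegrableOn B {s | ∀ i, 0 ≤ s i})
    (hwTB : ∀ s, w s * ‖T s‖ ≤ B s) {ε : ℝ} (hε : ∀ t, ‖g t‖ * ν t ≤ ε)
    (t : EuclideanSpace ℝ ι) :
    ‖orthantConv T g t‖ * ν t ≤ (∫ s in {s | ∀ i, 0 ≤ s i}, B s) * ε := by
  refine (norm_orthantConv_mul_le_integral hν t).trans ?_
  rw [← integral_mul_const]
  refine integral_mono_of_nonneg (ae_of_all _ fun s => mul_nonneg (norm_nonneg _) (hν t))
    (hB.mul_const ε) ?_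
  exact (ae_restrict_iff' measurableSet_setOf_forall_nonneg).2
    (ae_of_all _ fun s hs => norm_apply_mul_le_of_forall_norm_mul_le hν hsub hw hwTB hε hs t)

lemma tendsto_norm_orthantConv_mul_comap_norm_atTop [CompleteSpace X]
    (hT : ∀ x, ContinuousOn (fun s => T s x) {s | ∀ i, 0 < s i}) (hν : ∀ t, 0 ≤ ν t)
    (hsub : ∀ x y : EuclideanSpace ℝ ι, (∀ i, 0 ≤ y i) → ν (x + y) ≤ ν x * w y)
    (hw : ∀ s, 0 ≤ w s) (hB : IntegrableOn B {s | ∀ i, 0 ≤ s i})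
    (hwTB : ∀ s, w s * ‖T s‖ ≤ B s) (hg : Continuous g) {ε : ℝ}
    (hε : ∀ t, ‖g t‖ * ν t ≤ ε)
    (hlim : Tendsto (fun t => ‖g t‖ * ν t) (comap (‖·‖) atTop) (𝓝 0)) :
    Tendsto (fun t => ‖orthantConv T g t‖ * ν t) (comap (‖·‖) atTop) (𝓝 0) := by
  have hpointwise : ∀ s, (∀ i, 0 ≤ s i) →
      Tendsto (fun t => ‖T s (g (t - s))‖ * ν t) (comap (‖·‖) atTop) (𝓝 0) := fun s hs =>
    squeeze_zero (fun t => mul_nonneg (norm_nonneg _) (hν t))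
      (norm_apply_mul_le_weight_mul hν hsub hs)
      (by simpa using (hlim.comp (comap_norm_atTop (E := EuclideanSpace ℝ ι) ▸
        tendsto_sub_const_cobounded s)).const_mul (w s * ‖T s‖))
  have hintegral : Tendsto (fun t => ∫ s in {s | ∀ i, 0 ≤ s i}, ‖T s (g (t - s))‖ * ν t)
      (comap (‖·‖) atTop) (𝓝 0) := by
    simpa using tendsto_integral_filter_of_dominated_convergence (fun s => B s * ε)
      (Eventually.of_forall fun t => (aestronglyMeasurable_apply_of_continuousOn_apply hT
        (hg.comp (continuous_sub_left t))).norm.mul_const _)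
      (Eventually.of_forall fun t => (ae_restrict_iff' measurableSet_setOf_forall_nonneg).2
        (ae_of_all _ fun s hs => by
          rw [Real.norm_of_nonneg (mul_nonneg (norm_nonneg _) (hν t))]
          exact norm_apply_mul_le_of_forall_norm_mul_le hν hsub hw hwTB hε hs t))
      (hB.mul_const ε)
      ((ae_restrict_iff' measurableSet_setOf_forall_nonneg).2 (ae_of_all _ hpointwise))
  exact squeeze_zero (fun t => mul_nonneg (norm_nonneg _) (hν t))
    (norm_orthantConv_mul_le_integral hν) hintegral

end Orthant

theorem stmt4_general {n : ℕ} {X Y : Type*}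
    [NormedAddCommGroup X] [NormedSpace ℂ X] [CompleteSpace X]
    [NormedAddCommGroup Y] [NormedSpace ℂ Y]
    (T : EuclideanSpace ℝ (Fin n) → (X →L[ℂ] Y))
    (hTcont : ∀ x : X, ContinuousOn (fun t => T t x)
      {t : EuclideanSpace ℝ (Fin n) | ∀ i, 0 < t i})
    (c : ℂ)
    (I' : Set (EuclideanSpace ℝ (Fin n)))
    (ν : EuclideanSpace ℝ (Fin n) → ℝ) (hν : ∀ t, 0 < ν t)
    (w : EuclideanSpace ℝ (Fin n) → ℝ) (hw : ∀ t, 0 < w t)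
    (hsub : ∀ x y : EuclideanSpace ℝ (Fin n), (∀ i, 0 ≤ y i) → ν (x + y) ≤ ν x * w y)
    (hint : MeasureTheory.IntegrableOn
      (fun t => (1 + w t) * ‖T t‖) {t : EuclideanSpace ℝ (Fin n) | ∀ i, 0 < t i})
    (f : EuclideanSpace ℝ (Fin n) → X)
    (hfb : ∃ M : ℝ, ∀ t, ‖f t‖ ≤ M) (hfc : Continuous f)
    (hfap : BohrIcC0nuAP I' c ν f)
    (F : EuclideanSpace ℝ (Fin n) → Y)
    (hFdef : ∀ t, F t =
      ∫ s in {s : EuclideanSpace ℝ (Fin n) | ∀ i, 0 ≤ s i}, T s (f (t - s))) :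
    (∃ M : ℝ, ∀ t, ‖F t‖ ≤ M) ∧ Continuous F ∧ BohrIcC0nuAP I' c ν F := by
  obtain ⟨M, hM⟩ := hfb
  obtain rfl : F = orthantConv T f := funext hFdef
  set B := fun t => (1 + w t) * ‖T t‖
  have hB : IntegrableOn B {s | ∀ i, 0 ≤ s i} :=
    hint.congr_set_ae setOf_forall_pos_ae_eq_setOf_forall_nonneg.symm
  have hTB : ∀ s, ‖T s‖ ≤ B s := fun s =>
    le_mul_of_one_le_left (norm_nonneg _) (by linarith [hw s])
  have hwTB : ∀ s, w s * ‖T s‖ ≤ B s := fun s =>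
    mul_le_mul_of_nonneg_right (by linarith) (norm_nonneg _)
  have hFc := continuous_orthantConv hTcont hB hTB hfc hM
  refine ⟨⟨_, norm_orthantConv_le hB hTB hM⟩, hFc, fun ε hε => ?_⟩
  set K := ∫ s in {s | ∀ i, 0 ≤ s i}, B s
  have hK : 0 ≤ K := integral_nonneg fun s => (norm_nonneg _).trans (hTB s)
  obtain ⟨l, hl, hAP⟩ := hfap (ε / (K + 1)) (by positivity)
  refine ⟨l, hl, fun t₀ ht₀ => ?_⟩
  obtain ⟨τ, hτ, hτl, ⟨hgc, hglim⟩, hgε⟩ := hAP t₀ ht₀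
  have hshift := orthantConv_comp_add_sub_smul hTcont hB hTB hfc hM τ c
  refine ⟨τ, hτ, hτl, ⟨(hFc.comp (continuous_add_const τ)).sub (hFc.const_smul c), ?_⟩,
    fun t => ?_⟩
  · simpa only [hshift] using tendsto_norm_orthantConv_mul_comap_norm_atTop hTcont
      (fun t => (hν t).le) hsub (fun s => (hw s).le) hB hwTB hgc hgε hglim
  · rw [← hshift]
    calc _ ≤ K * (ε / (K + 1)) :=
          norm_orthantConv_mul_le (fun t => (hν t).le) hsub (fun s => (hw s).le) hB hwTB hgε t
      _ ≤ ε := by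
          rw [mul_div_assoc', div_le_iff₀ (by positivity)]
          nlinarith

/-- Invariance of Bohr `(I',c,𝒫)`-almost periodicity under the action of the infinite
convolution product `F(t) = ∫_{[0,∞)ⁿ} R(s) f(t−s) ds`. -/
theorem stmt4 {n : ℕ} {X Y : Type*}
    [NormedAddCommGroup X] [NormedSpace ℂ X] [CompleteSpace X]
    [NormedAddCommGroup Y] [NormedSpace ℂ Y] [CompleteSpace Y]
    (T : EuclideanSpace ℝ (Fin n) → (X →L[ℂ] Y))
    (hTcont : ∀ x : X, ContinuousOn (fun t => T t x)
      {t : EuclideanSpace ℝ (Fin n) | ∀ i, 0 < t i})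
    (c : ℂ) (hcne : c ≠ 0)
    (I' : Set (EuclideanSpace ℝ (Fin n))) (hI' : I'.Nonempty)
    (ν : EuclideanSpace ℝ (Fin n) → ℝ) (hν : ∀ t, 0 < ν t)
    (hloc : ∀ r : ℝ, 0 < r → ∃ M : ℝ, ∀ t : EuclideanSpace ℝ (Fin n), ‖t‖ ≤ r → 1 / ν t ≤ M)
    (w : EuclideanSpace ℝ (Fin n) → ℝ) (hw : ∀ t, 0 < w t)
    (hsub : ∀ x y : EuclideanSpace ℝ (Fin n), (∀ i, 0 ≤ y i) → ν (x + y) ≤ ν x * w y)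
    (hint : MeasureTheory.IntegrableOn
      (fun t => (1 + w t) * ‖T t‖) {t : EuclideanSpace ℝ (Fin n) | ∀ i, 0 < t i})
    (f : EuclideanSpace ℝ (Fin n) → X)
    (hfb : ∃ M : ℝ, ∀ t, ‖f t‖ ≤ M) (hfc : Continuous f)
    (hfap : BohrIcC0nuAP I' c ν f)
    (F : EuclideanSpace ℝ (Fin n) → Y)
    (hFdef : ∀ t, F t =
      ∫ s in {s : EuclideanSpace ℝ (Fin n) | ∀ i, 0 ≤ s i}, T s (f (t - s))) :
    (∃ M : ℝ, ∀ t, ‖F t‖ ≤ M) ∧ Continuous F ∧ BohrIcC0nuAP I' c ν F :=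
  stmt4_general T hTcont c I' ν hν w hw hsub hint f hfb hfc hfap F hFdef
end
end

section
/- Let ∅ ≠ I ⊆ ℝⁿ, let X, Y be complex Banach spaces, let 𝓑 be a nonempty collection of nonempty subsets of X whose union is X, let R_X be a nonempty collection of sequences in ℝⁿ × X such that t + b(l) ∈ I for all t ∈ I, (b;x) ∈ R_X, l ∈ ℕ, and such that every subsequence of a sequence belonging to R_X also belongs to R_X; for each B ∈ 𝓑 and (b;x) ∈ R_X let L(B;(b;x)) be a collection of subsets of B containing all singletons {x}, x ∈ B, and assume L(B;(b';x')) = L(B;(b;x)) for every subsequence (b';x') of (b;x). Let 𝒫 = (P,d) be a complete metric space where P is a set of functions from I to Y containing the zero function, P is closed under addition and scalar multiplication, and d is translation invariant, i.e., d(f+g, h+g) = d(f,h) whenever f, h, f+g, h+g ∈ P. Suppose that for each j ∈ ℕ the function F_j : I × X → Y is (R_X,𝓑,𝒫,L)-multi-almost periodic of type 1, and that F : I × X → Y satisfies: for every B ∈ 𝓑, every sequence ((b_k;x_k)) ∈ R_X and every B' ∈ L(B;(b;x)), the functions F_i(·+b_l; x+x_l) − F(·+b_l; x+x_l) belong to P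 for all i, l ∈ ℕ and x ∈ B', and lim_{(i,l)→∞} sup_{x∈B'} ‖F_i(·+b_l; x+x_l) − F(·+b_l; x+x_l)‖_P = 0 (double limit). Then F is (R_X,𝓑,𝒫,L)-multi-almost periodic of type 1. -/
/-!
A diagonal argument. Fix `B ∈ 𝓑` and `b ∈ R_X`. Extracting successively, one gets nested
subsequences `Φ j` of `b` along which the translates of `F_j` converge in `𝒫` to some `F_j*`,
uniformly on every `B' ∈ L(B;b)`. Along the diagonal `Φ l l`, which is eventually a subsequence of
each `Φ j`, the translates of `F` are uniformly close to those of `F_i` for large `i` (the double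
limit), hence to `F_i*`, so they are uniformly Cauchy on `B'`. Completeness of `𝒫`, applied on the
singletons `{x} ∈ L(B;b)`, gives the limit `F*(·;x)`, and uniform Cauchyness makes the convergence
uniform. Translation invariance of `d` turns `d(f - g, 0)` into `d(f, g)`, and the translates of
`F` lie in `P` because `F = F_i - (F_i - F)`.
-/

noncomputable section

/-- `d` is a metric on the set `P` of functions. -/
def IsMetricOn {α Y : Type*} (P : Set (α → Y)) (d : (α → Y) → (α → Y) → ℝ) : Prop :=
  (∀ f ∈ P, d f f = 0) ∧ (∀ f ∈ P, ∀ g ∈ P, d f g = 0 → f = g) ∧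
    (∀ f ∈ P, ∀ g ∈ P, d f g = d g f) ∧
    (∀ f ∈ P, ∀ g ∈ P, ∀ h ∈ P, d f h ≤ d f g + d g h)

/-- `(R_X,𝓑,𝒫,L)`-multi-almost periodicity of type 1 of `F : I × X → Y`: besides the
memberships `F(·+b_{k_l}; x+x_{k_l}) − F*(·;x) ∈ P` and the limit condition, one also
requires `F(·+b_{k_l}; x+x_{k_l}) ∈ P` and `F*(·;x) ∈ P`. -/
def MultiAPX1 {n : ℕ} {X Y : Type*} [AddCommGroup X] [SubtractionMonoid Y]
    (I : Set (EuclideanSpace ℝ (Fin n)))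
    (RX : Set (ℕ → EuclideanSpace ℝ (Fin n) × X))
    (𝓑 : Set (Set X))
    (L : Set X → (ℕ → EuclideanSpace ℝ (Fin n) × X) → Set (Set X))
    (P : Set (↥I → Y)) (d : (↥I → Y) → (↥I → Y) → ℝ)
    (hR : ∀ b ∈ RX, ∀ l : ℕ, ∀ t ∈ I, t + (b l).1 ∈ I)
    (F : ↥I → X → Y) : Prop :=
  ∀ B ∈ 𝓑, ∀ b, ∀ hb : b ∈ RX, ∃ k : ℕ → ℕ, StrictMono k ∧ ∃ Fs : ↥I → X → Y,
    (∀ l : ℕ, ∀ x ∈ B,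
      (fun t : ↥I =>
        F ⟨(t : EuclideanSpace ℝ (Fin n)) + (b (k l)).1, hR b hb (k l) t t.2⟩
          (x + (b (k l)).2)) ∈ P ∧
      (fun t : ↥I => Fs t x) ∈ P ∧
      (fun t : ↥I =>
        F ⟨(t : EuclideanSpace ℝ (Fin n)) + (b (k l)).1, hR b hb (k l) t t.2⟩
          (x + (b (k l)).2) - Fs t x) ∈ P) ∧
    (∀ B' ∈ L B b, ∀ ε : ℝ, 0 < ε → ∃ N : ℕ, ∀ l ≥ N, ∀ x ∈ B',
      d (fun t : ↥I =>
        F ⟨(t : EuclideanSpace ℝ (Fin n)) + (b (k l)).1, hR b hb (k l) t t.2⟩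
          (x + (b (k l)).2) - Fs t x) 0 ≤ ε)

theorem sub_mem_of_add_mem_of_smul_mem {𝕜 M : Type*} [Ring 𝕜] [AddCommGroup M] [Module 𝕜 M]
    {P : Set M} (hadd : ∀ f ∈ P, ∀ g ∈ P, f + g ∈ P) (hsmul : ∀ c : 𝕜, ∀ f ∈ P, c • f ∈ P)
    {f g : M} (hf : f ∈ P) (hg : g ∈ P) : f - g ∈ P := by
  simpa [sub_eq_add_neg] using hadd f hf _ (hsmul (-1) g hg)

theorem apply_eq_apply_sub_zero_of_add_invariant {M : Type*} [AddGroup M] {P : Set M}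
    {d : M → M → ℝ}
    (hd : ∀ f g h : M, f ∈ P → h ∈ P → f + g ∈ P → h + g ∈ P → d (f + g) (h + g) = d f h)
    (h0 : 0 ∈ P) {f g : M} (hf : f ∈ P) (hg : g ∈ P) (hfg : f - g ∈ P) : d f g = d (f - g) 0 := by
  simpa using hd (f - g) g 0 hfg h0 (by simpa using hf) (by simpa using hg)

theorem exists_diagonal_subseq {Q : ℕ → (ℕ → ℕ) → Prop}
    (h : ∀ j (ψ : ℕ → ℕ), StrictMono ψ → ∃ θ : ℕ → ℕ, StrictMono θ ∧ Q j (ψ ∘ θ)) :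
    ∃ Φ : ℕ → ℕ → ℕ, (∀ j, StrictMono (Φ j) ∧ Q j (Φ j)) ∧ StrictMono (fun l => Φ l l) ∧
      ∀ j l, j ≤ l → ∃ m ≥ l, Φ l l = Φ j m := by
  choose θ hθ hQ using h
  let Ψ : ℕ → {ψ : ℕ → ℕ // StrictMono ψ} := fun j =>
    Nat.rec ⟨id, strictMono_id⟩ (fun j ψ => ⟨ψ.1 ∘ θ j ψ.1 ψ.2, ψ.2.comp (hθ j ψ.1 ψ.2)⟩) j
  have hnested : ∀ j l, j ≤ l → ∃ χ, StrictMono χ ∧ (Ψ l).1 = (Ψ j).1 ∘ χ := by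
    intro j l hjl
    induction l, hjl using Nat.le_induction with
    | base => exact ⟨id, strictMono_id, rfl⟩
    | succ l _ ih =>
      obtain ⟨χ, hχ, he⟩ := ih
      exact ⟨χ ∘ θ l (Ψ l).1 (Ψ l).2, hχ.comp (hθ ..), by rw [← Function.comp_assoc, ← he]⟩
  refine ⟨fun j => (Ψ (j + 1)).1, fun j => ⟨(Ψ (j + 1)).2, hQ j _ _⟩, ?_, ?_⟩
  · refine strictMono_nat_of_lt_succ fun l => (Ψ (l + 1)).2 ?_
    exact Nat.lt_of_lt_of_le (Nat.lt_succ_self l) (hθ (l + 1) _ (Ψ (l + 1)).2).le_apply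
  · intro j l hjl
    obtain ⟨χ, hχ, he⟩ := hnested (j + 1) (l + 1) (Nat.succ_le_succ hjl)
    exact ⟨χ l, hχ.le_apply, congrFun he l⟩

section Uniformly

variable {X M : Type*}

def TendstoUniformlyOnWrt (d : M → M → ℝ) (w : ℕ → X → M) (g : X → M) (S : Set X) : Prop :=
  ∀ ε > 0, ∃ N, ∀ l ≥ N, ∀ x ∈ S, d (w l x) (g x) ≤ ε

def UniformCauchySeqOnWrt (d : M → M → ℝ) (w : ℕ → X → M) (S : Set X) : Prop :=
  ∀ ε > 0, ∃ N, ∀ l ≥ N, ∀ m ≥ N, ∀ x ∈ S, d (w l x) (w m x) ≤ ε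

end Uniformly

namespace IsMetricOn

variable {α Y X : Type*} {P : Set (α → Y)} {d : (α → Y) → (α → Y) → ℝ}

theorem symm (hd : IsMetricOn P d) {f g : α → Y} (hf : f ∈ P) (hg : g ∈ P) : d f g = d g f :=
  hd.2.2.1 f hf g hg

theorem triangle (hd : IsMetricOn P d) {f g h : α → Y} (hf : f ∈ P) (hg : g ∈ P) (hh : h ∈ P) :
    d f h ≤ d f g + d g h :=
  hd.2.2.2 f hf g hg h hh

theorem mem_and_eq_of_sub_mem [AddCommGroup Y] (hd : IsMetricOn P d)
    (hsub : ∀ f ∈ P, ∀ g ∈ P, f - g ∈ P) (hdist : ∀ f ∈ P, ∀ g ∈ P, d f g = d (f - g) 0)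
    {f g : α → Y} (hg : g ∈ P) (hgf : g - f ∈ P) : f ∈ P ∧ d f g = d (g - f) 0 := by
  have hf : f ∈ P := by simpa only [sub_sub_cancel] using hsub g hg (g - f) hgf
  exact ⟨hf, by rw [hd.symm hf hg, hdist g hg f hf]⟩

theorem uniformCauchySeqOnWrt_of_approx (hd : IsMetricOn P d) {w : ℕ → X → α → Y} {S : Set X}
    (hw : ∀ l, ∀ x ∈ S, w l x ∈ P)
    (happrox : ∀ ε > 0, ∃ c : X → α → Y, (∀ x ∈ S, c x ∈ P) ∧
      ∃ N, ∀ l ≥ N, ∀ x ∈ S, d (w l x) (c x) ≤ ε) :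
    UniformCauchySeqOnWrt d w S := by
  intro ε hε
  obtain ⟨c, hc, N, hN⟩ := happrox (ε / 2) (half_pos hε)
  refine ⟨N, fun l hl m hm x hx => ?_⟩
  calc d (w l x) (w m x) ≤ d (w l x) (c x) + d (c x) (w m x) :=
        hd.triangle (hw l x hx) (hc x hx) (hw m x hx)
    _ = d (w l x) (c x) + d (w m x) (c x) := by rw [hd.symm (hc x hx) (hw m x hx)]
    _ ≤ ε / 2 + ε / 2 := add_le_add (hN l hl x hx) (hN m hm x hx)
    _ = ε := add_halves ε

theorem tendstoUniformlyOnWrt_of_uniformCauchy (hd : IsMetricOn P d) {w : ℕ → X → α → Y}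
    {g : X → α → Y} {S : Set X} (hw : ∀ l, ∀ x ∈ S, w l x ∈ P) (hg : ∀ x ∈ S, g x ∈ P)
    (hcauchy : UniformCauchySeqOnWrt d w S) (hlim : ∀ x ∈ S, TendstoUniformlyOnWrt d w g {x}) :
    TendstoUniformlyOnWrt d w g S := by
  intro ε hε
  obtain ⟨N, hN⟩ := hcauchy (ε / 2) (half_pos hε)
  refine ⟨N, fun l hl x hx => ?_⟩
  obtain ⟨N', hN'⟩ := hlim x hx (ε / 2) (half_pos hε)
  have hm := le_max_left N N'
  calc d (w l x) (g x) ≤ d (w l x) (w (max N N') x) + d (w (max N N') x) (g x) :=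
        hd.triangle (hw l x hx) (hw _ x hx) (hg x hx)
    _ ≤ ε / 2 + ε / 2 := add_le_add (hN l hl _ hm x hx) (hN' _ (le_max_right N N') x rfl)
    _ = ε := add_halves ε

theorem exists_tendstoUniformlyOnWrt_of_uniformCauchy (hd : IsMetricOn P d)
    (hcomplete : ∀ u : ℕ → α → Y, (∀ m, u m ∈ P) →
      (∀ ε : ℝ, 0 < ε → ∃ N : ℕ, ∀ m ≥ N, ∀ m' ≥ N, d (u m) (u m') ≤ ε) →
      ∃ g ∈ P, ∀ ε : ℝ, 0 < ε → ∃ N : ℕ, ∀ m ≥ N, d (u m) g ≤ ε)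
    {B : Set X} {𝓛 : Set (Set X)} (hsingleton : ∀ x ∈ B, {x} ∈ 𝓛) (hsubset : ∀ B' ∈ 𝓛, B' ⊆ B)
    {w : ℕ → X → α → Y} (hw : ∀ l, ∀ x ∈ B, w l x ∈ P)
    (hcauchy : ∀ B' ∈ 𝓛, UniformCauchySeqOnWrt d w B') :
    ∃ g : X → α → Y, (∀ x ∈ B, g x ∈ P) ∧ ∀ B' ∈ 𝓛, TendstoUniformlyOnWrt d w g B' := by
  have hpointwise : ∀ x, ∃ gx : α → Y, x ∈ B →
      gx ∈ P ∧ ∀ ε : ℝ, 0 < ε → ∃ N : ℕ, ∀ m ≥ N, d (w m x) gx ≤ ε := by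
    intro x
    by_cases hx : x ∈ B
    · obtain ⟨gx, hgx, hlim⟩ := hcomplete _ (fun l => hw l x hx)
        (by simpa [UniformCauchySeqOnWrt] using hcauchy {x} (hsingleton x hx))
      exact ⟨gx, fun _ => ⟨hgx, hlim⟩⟩
    · exact ⟨w 0 x, fun h => absurd h hx⟩
  choose g hg using hpointwise
  refine ⟨g, fun x hx => (hg x hx).1, fun B' hB' => ?_⟩
  have hB'B := hsubset B' hB'
  exact hd.tendstoUniformlyOnWrt_of_uniformCauchy (fun l x hx => hw l x (hB'B hx))
    (fun x hx => (hg x (hB'B hx)).1) (hcauchy B' hB')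
    fun x hx => by simpa [TendstoUniformlyOnWrt] using (hg x (hB'B hx)).2

theorem uniformCauchySeqOnWrt_diagonal (hd : IsMetricOn P d) {S : Set X} {u : ℕ → X → α → Y}
    {v : ℕ → ℕ → X → α → Y} {G : ℕ → X → α → Y} {Φ : ℕ → ℕ → ℕ}
    (hΦ : ∀ j l, j ≤ l → ∃ m ≥ l, Φ l l = Φ j m)
    (hmem : ∀ i m, ∀ x ∈ S, u (Φ i m) x ∈ P ∧ v i (Φ i m) x ∈ P ∧ G i x ∈ P)
    (huv : ∀ ε > 0, ∃ N, ∀ i ≥ N, ∀ m ≥ N, ∀ x ∈ S, d (u (Φ i m) x) (v i (Φ i m) x) ≤ ε)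
    (hvG : ∀ i, TendstoUniformlyOnWrt d (fun m => v i (Φ i m)) (G i) S) :
    UniformCauchySeqOnWrt d (fun l => u (Φ l l)) S := by
  refine hd.uniformCauchySeqOnWrt_of_approx (fun l x hx => (hmem l l x hx).1) fun ε hε => ?_
  obtain ⟨N₁, hN₁⟩ := huv (ε / 2) (half_pos hε)
  obtain ⟨N₂, hN₂⟩ := hvG N₁ (ε / 2) (half_pos hε)
  refine ⟨G N₁, fun x hx => (hmem N₁ 0 x hx).2.2, max N₁ N₂, fun l hl x hx => ?_⟩
  obtain ⟨m, hlm, he⟩ := hΦ N₁ l (le_of_max_le_left hl)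
  obtain ⟨hu, hv, hG⟩ := hmem N₁ m x hx
  have hm : max N₁ N₂ ≤ m := hl.trans hlm
  rw [he]
  calc d (u (Φ N₁ m) x) (G N₁ x)
        ≤ d (u (Φ N₁ m) x) (v N₁ (Φ N₁ m) x) + d (v N₁ (Φ N₁ m) x) (G N₁ x) :=
        hd.triangle hu hv hG
    _ ≤ ε / 2 + ε / 2 :=
        add_le_add (hN₁ N₁ le_rfl m (le_of_max_le_left hm) x hx)
          (hN₂ m (le_of_max_le_right hm) x hx)
    _ = ε := add_halves ε

end IsMetricOn

section Translates

variable {E X Y : Type*} [Add E] [Add X] {I : Set E}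

def translateAlong (G : ↥I → X → Y) (b : ℕ → E × X) (hb : ∀ l, ∀ t ∈ I, t + (b l).1 ∈ I) (l : ℕ)
    (x : X) : ↥I → Y :=
  fun t => G ⟨(t : E) + (b l).1, hb l t t.2⟩ (x + (b l).2)

def TranslatesConverge (P : Set (↥I → Y)) (d : (↥I → Y) → (↥I → Y) → ℝ) (G : ↥I → X → Y)
    (b : ℕ → E × X) (hb : ∀ l, ∀ t ∈ I, t + (b l).1 ∈ I) (B : Set X) (𝓛 : Set (Set X))
    (k : ℕ → ℕ) (Gs : X → ↥I → Y) : Prop :=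
  (∀ l, ∀ x ∈ B, translateAlong G b hb (k l) x ∈ P ∧ Gs x ∈ P) ∧
    ∀ B' ∈ 𝓛, TendstoUniformlyOnWrt d (fun l => translateAlong G b hb (k l)) Gs B'

end Translates

theorem multiAPX1_iff {n : ℕ} {X Y : Type*} [AddCommGroup X] [AddCommGroup Y]
    {I : Set (EuclideanSpace ℝ (Fin n))} {RX : Set (ℕ → EuclideanSpace ℝ (Fin n) × X)}
    {𝓑 : Set (Set X)} {L : Set X → (ℕ → EuclideanSpace ℝ (Fin n) × X) → Set (Set X)}
    {P : Set (↥I → Y)} {d : (↥I → Y) → (↥I → Y) → ℝ}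
    {hR : ∀ b ∈ RX, ∀ l : ℕ, ∀ t ∈ I, t + (b l).1 ∈ I} {F : ↥I → X → Y}
    (hsub : ∀ f ∈ P, ∀ g ∈ P, f - g ∈ P) (hdist : ∀ f ∈ P, ∀ g ∈ P, d f g = d (f - g) 0)
    (hL : ∀ B ∈ 𝓑, ∀ b ∈ RX, ∀ B' ∈ L B b, B' ⊆ B) :
    MultiAPX1 I RX 𝓑 L P d hR F ↔ ∀ B ∈ 𝓑, ∀ b, ∀ hb : b ∈ RX, ∃ k, StrictMono k ∧
      ∃ Gs, TranslatesConverge P d F b (hR b hb) B (L B b) k Gs := by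
  refine forall₂_congr fun B hB => forall₂_congr fun b hb =>
    exists_congr fun k => and_congr_right fun _ => ⟨?_, ?_⟩
  · rintro ⟨Fs, hmem, hlim⟩
    refine ⟨fun x t => Fs t x, fun l x hx => ⟨(hmem l x hx).1, (hmem l x hx).2.1⟩,
      fun B' hB' ε hε => ?_⟩
    obtain ⟨N, hN⟩ := hlim B' hB' ε hε
    refine ⟨N, fun l hl x hx => ?_⟩
    obtain ⟨hF, hFs, -⟩ := hmem l x (hL B hB b hb B' hB' hx)
    exact (hdist _ hF _ hFs).trans_le (hN l hl x hx)
  · rintro ⟨Gs, hmem, hlim⟩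
    refine ⟨fun t x => Gs x t, fun l x hx => ?_, fun B' hB' ε hε => ?_⟩
    · obtain ⟨hF, hGs⟩ := hmem l x hx
      exact ⟨hF, hGs, hsub _ hF _ hGs⟩
    obtain ⟨N, hN⟩ := hlim B' hB' ε hε
    refine ⟨N, fun l hl x hx => ?_⟩
    obtain ⟨hF, hGs⟩ := hmem l x (hL B hB b hb B' hB' hx)
    exact (hdist _ hF _ hGs).symm.trans_le (hN l hl x hx)

theorem stmt6_general {n : ℕ} {X Y : Type*}
    [NormedAddCommGroup X]
    [NormedAddCommGroup Y] [NormedSpace ℂ Y]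
    (I : Set (EuclideanSpace ℝ (Fin n)))
    (RX : Set (ℕ → EuclideanSpace ℝ (Fin n) × X))
    (hR : ∀ b ∈ RX, ∀ l : ℕ, ∀ t ∈ I, t + (b l).1 ∈ I)
    (hRXsub : ∀ b ∈ RX, ∀ φ : ℕ → ℕ, StrictMono φ → (b ∘ φ) ∈ RX)
    (𝓑 : Set (Set X))
    (L : Set X → (ℕ → EuclideanSpace ℝ (Fin n) × X) → Set (Set X))
    (hL : ∀ B ∈ 𝓑, ∀ b ∈ RX, (∀ B' ∈ L B b, B' ⊆ B) ∧ ∀ x ∈ B, {x} ∈ L B b)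
    (hLsub : ∀ B : Set X, ∀ b : ℕ → EuclideanSpace ℝ (Fin n) × X, ∀ φ : ℕ → ℕ,
      StrictMono φ → L B (b ∘ φ) = L B b)
    (P : Set (↥I → Y)) (d : (↥I → Y) → (↥I → Y) → ℝ)
    (hP0 : (0 : ↥I → Y) ∈ P) (hPd : IsMetricOn P d)
    (hPadd : ∀ f ∈ P, ∀ g ∈ P, f + g ∈ P)
    (hPsmul : ∀ c : ℂ, ∀ f ∈ P, c • f ∈ P)
    (hdtrans : ∀ f g h : ↥I → Y, f ∈ P → h ∈ P → f + g ∈ P → h + g ∈ P →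
      d (f + g) (h + g) = d f h)
    (hcomplete : ∀ u : ℕ → (↥I → Y), (∀ m, u m ∈ P) →
      (∀ ε : ℝ, 0 < ε → ∃ N : ℕ, ∀ m ≥ N, ∀ m' ≥ N, d (u m) (u m') ≤ ε) →
      ∃ g ∈ P, ∀ ε : ℝ, 0 < ε → ∃ N : ℕ, ∀ m ≥ N, d (u m) g ≤ ε)
    (Fj : ℕ → ↥I → X → Y)
    (hFj : ∀ j : ℕ, MultiAPX1 I RX 𝓑 L P d hR (Fj j))
    (F : ↥I → X → Y)
    (hconv : ∀ B ∈ 𝓑, ∀ b, ∀ hb : b ∈ RX, ∀ B' ∈ L B b,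
      (∀ i l : ℕ, ∀ x ∈ B',
        (fun t : ↥I =>
          Fj i ⟨(t : EuclideanSpace ℝ (Fin n)) + (b l).1, hR b hb l t t.2⟩ (x + (b l).2) -
            F ⟨(t : EuclideanSpace ℝ (Fin n)) + (b l).1, hR b hb l t t.2⟩ (x + (b l).2)) ∈ P) ∧
      (∀ ε : ℝ, 0 < ε → ∃ N : ℕ, ∀ i ≥ N, ∀ l ≥ N, ∀ x ∈ B',
        d (fun t : ↥I =>
          Fj i ⟨(t : EuclideanSpace ℝ (Fin n)) + (b l).1, hR b hb l t t.2⟩ (x + (b l).2) -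
            F ⟨(t : EuclideanSpace ℝ (Fin n)) + (b l).1, hR b hb l t t.2⟩ (x + (b l).2)) 0 ≤ ε)) :
    MultiAPX1 I RX 𝓑 L P d hR F := by
  have hsub : ∀ f ∈ P, ∀ g ∈ P, f - g ∈ P := fun f hf g hg =>
    sub_mem_of_add_mem_of_smul_mem hPadd hPsmul hf hg
  have hdist : ∀ f ∈ P, ∀ g ∈ P, d f g = d (f - g) 0 := fun f hf g hg =>
    apply_eq_apply_sub_zero_of_add_invariant hdtrans hP0 hf hg (hsub f hf g hg)
  have hLB : ∀ B ∈ 𝓑, ∀ b ∈ RX, ∀ B' ∈ L B b, B' ⊆ B := fun B hB b hb => (hL B hB b hb).1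
  refine (multiAPX1_iff hsub hdist hLB).2 fun B hB b hb => ?_
  obtain ⟨Φ, hΦ, hmono, hdiag⟩ := exists_diagonal_subseq
    (Q := fun j φ => ∃ G, TranslatesConverge P d (Fj j) b (hR b hb) B (L B b) φ G)
    fun j ψ hψ => ((multiAPX1_iff hsub hdist hLB).1 (hFj j) B hB (b ∘ ψ)
      (hRXsub b hb ψ hψ)).imp fun θ ⟨hθ, G, hG⟩ => ⟨hθ, G, by rwa [hLsub B b ψ hψ] at hG⟩
  choose G hGmem hGlim using fun j => (hΦ j).2
  set u := translateAlong F b (hR b hb)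
  set v := fun i => translateAlong (Fj i) b (hR b hb)
  have hFmem : ∀ i m, ∀ x ∈ B,
      u (Φ i m) x ∈ P ∧ d (u (Φ i m) x) (v i (Φ i m) x) = d (v i (Φ i m) x - u (Φ i m) x) 0 :=
    fun i m x hx => hPd.mem_and_eq_of_sub_mem hsub hdist (hGmem i m x hx).1
      ((hconv B hB b hb {x} ((hL B hB b hb).2 x hx)).1 i (Φ i m) x rfl)
  have hcauchy : ∀ B' ∈ L B b, UniformCauchySeqOnWrt d (fun l => u (Φ l l)) B' := by
    intro B' hB'
    have hB'B := hLB B hB b hb B' hB'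
    refine hPd.uniformCauchySeqOnWrt_diagonal hdiag
      (fun i m x hx => ⟨(hFmem i m x (hB'B hx)).1, hGmem i m x (hB'B hx)⟩)
      (fun ε hε => ?_) fun i => hGlim i B' hB'
    obtain ⟨N, hN⟩ := (hconv B hB b hb B' hB').2 ε hε
    exact ⟨N, fun i hi m hm x hx => (hFmem i m x (hB'B hx)).2 ▸
      hN i hi (Φ i m) (hm.trans (hΦ i).1.le_apply) x hx⟩
  obtain ⟨g, hgmem, hglim⟩ := hPd.exists_tendstoUniformlyOnWrt_of_uniformCauchy hcomplete
    (hL B hB b hb).2 (hLB B hB b hb) (fun l x hx => (hFmem l l x hx).1) hcauchy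
  exact ⟨fun l => Φ l l, hmono, g, fun l x hx => ⟨(hFmem l l x hx).1, hgmem x hx⟩, hglim⟩

/-- Convergence of a sequence of `(R_X,𝓑,𝒫,L)`-multi-almost periodic functions of type 1
in the complete metric space `𝒫` yields an `(R_X,𝓑,𝒫,L)`-multi-almost periodic limit
function of type 1. -/
theorem stmt6 {n : ℕ} {X Y : Type*}
    [NormedAddCommGroup X] [NormedSpace ℂ X] [CompleteSpace X]
    [NormedAddCommGroup Y] [NormedSpace ℂ Y] [CompleteSpace Y]
    (I : Set (EuclideanSpace ℝ (Fin n))) (hI : I.Nonempty)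
    (RX : Set (ℕ → EuclideanSpace ℝ (Fin n) × X)) (hRXne : RX.Nonempty)
    (hR : ∀ b ∈ RX, ∀ l : ℕ, ∀ t ∈ I, t + (b l).1 ∈ I)
    (hRXsub : ∀ b ∈ RX, ∀ φ : ℕ → ℕ, StrictMono φ → (b ∘ φ) ∈ RX)
    (𝓑 : Set (Set X)) (h𝓑ne : 𝓑.Nonempty) (h𝓑 : ∀ B ∈ 𝓑, B.Nonempty)
    (h𝓑union : ∀ x : X, ∃ B ∈ 𝓑, x ∈ B)
    (L : Set X → (ℕ → EuclideanSpace ℝ (Fin n) × X) → Set (Set X))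
    (hL : ∀ B ∈ 𝓑, ∀ b ∈ RX, (∀ B' ∈ L B b, B' ⊆ B) ∧ ∀ x ∈ B, {x} ∈ L B b)
    (hLsub : ∀ B : Set X, ∀ b : ℕ → EuclideanSpace ℝ (Fin n) × X, ∀ φ : ℕ → ℕ,
      StrictMono φ → L B (b ∘ φ) = L B b)
    (P : Set (↥I → Y)) (d : (↥I → Y) → (↥I → Y) → ℝ)
    (hP0 : (0 : ↥I → Y) ∈ P) (hPd : IsMetricOn P d)
    (hPadd : ∀ f ∈ P, ∀ g ∈ P, f + g ∈ P)
    (hPsmul : ∀ c : ℂ, ∀ f ∈ P, c • f ∈ P)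
    (hdtrans : ∀ f g h : ↥I → Y, f ∈ P → h ∈ P → f + g ∈ P → h + g ∈ P →
      d (f + g) (h + g) = d f h)
    (hcomplete : ∀ u : ℕ → (↥I → Y), (∀ m, u m ∈ P) →
      (∀ ε : ℝ, 0 < ε → ∃ N : ℕ, ∀ m ≥ N, ∀ m' ≥ N, d (u m) (u m') ≤ ε) →
      ∃ g ∈ P, ∀ ε : ℝ, 0 < ε → ∃ N : ℕ, ∀ m ≥ N, d (u m) g ≤ ε)
    (Fj : ℕ → ↥I → X → Y)
    (hFj : ∀ j : ℕ, MultiAPX1 I RX 𝓑 L P d hR (Fj j))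
    (F : ↥I → X → Y)
    (hconv : ∀ B ∈ 𝓑, ∀ b, ∀ hb : b ∈ RX, ∀ B' ∈ L B b,
      (∀ i l : ℕ, ∀ x ∈ B',
        (fun t : ↥I =>
          Fj i ⟨(t : EuclideanSpace ℝ (Fin n)) + (b l).1, hR b hb l t t.2⟩ (x + (b l).2) -
            F ⟨(t : EuclideanSpace ℝ (Fin n)) + (b l).1, hR b hb l t t.2⟩ (x + (b l).2)) ∈ P) ∧
      (∀ ε : ℝ, 0 < ε → ∃ N : ℕ, ∀ i ≥ N, ∀ l ≥ N, ∀ x ∈ B',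
        d (fun t : ↥I =>
          Fj i ⟨(t : EuclideanSpace ℝ (Fin n)) + (b l).1, hR b hb l t t.2⟩ (x + (b l).2) -
            F ⟨(t : EuclideanSpace ℝ (Fin n)) + (b l).1, hR b hb l t t.2⟩ (x + (b l).2)) 0 ≤ ε)) :
    MultiAPX1 I RX 𝓑 L P d hR F :=
  stmt6_general I RX hR hRXsub 𝓑 L hL hLsub P d hP0 hPd hPadd hPsmul hdtrans hcomplete Fj hFj F
    hconv
end
end

section
/- Let ∅ ≠ I' ⊆ ℝⁿ and ∅ ≠ I ⊆ ℝⁿ with I + I' ⊆ I, let X, Y, Z be complex Banach spaces, let 𝓑 be a nonempty collection of nonempty subsets of X whose union is X, let ρ be a binary relation on Y, and let ρ_Z be a binary relation on Z. Let 𝒫 = (P,d) be a metric space with P a set of functions from I to Y containing 0, and 𝒫_Z = (P_Z,d_Z) a metric space with P_Z a set of functions from I to Z containing 0. Let φ : Y → Z be a map such that: (a) for all functions G₁, G₂ : I → Y with G₁ − G₂ ∈ P, the function φ∘G₁ − φ∘G₂ belongs to P_Z; (b) for every ε > 0 there exists δ > 0 such that for all G₁, G₂ : I → Y with G₁ − G₂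 ∈ P and ‖G₁ − G₂‖_P ≤ δ one has ‖φ∘G₁ − φ∘G₂‖_{P_Z} ≤ ε; and (c) φ(ρ(F(t;x))) ⊆ ρ_Z(φ(F(t;x))) for all t ∈ I and x ∈ X. If F : I × X → Y is Bohr (𝓑,I',ρ,𝒫)-almost periodic, then φ∘F : I × X → Z, (φ∘F)(t;x) := φ(F(t;x)), is Bohr (𝓑,I',ρ_Z,𝒫_Z)-almost periodic. -/
noncomputable section

/-- Bohr `(𝓑,I',ρ,𝒫)`-almost periodicity of `F : I × X → Y`. -/
def BohrAP {n : ℕ} {X Y : Type*} [SubtractionMonoid Y]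
    (I I' : Set (EuclideanSpace ℝ (Fin n)))
    (𝓑 : Set (Set X)) (ρ : Y → Y → Prop)
    (P : Set (↥I → Y)) (d : (↥I → Y) → (↥I → Y) → ℝ)
    (hII' : ∀ τ ∈ I', ∀ t ∈ I, t + τ ∈ I)
    (F : ↥I → X → Y) : Prop :=
  ∀ B ∈ 𝓑, ∀ ε : ℝ, 0 < ε → ∃ l : ℝ, 0 < l ∧ ∀ t₀ ∈ I',
    ∃ τ, ∃ hτ : τ ∈ I', ‖τ - t₀‖ ≤ l ∧
      ∃ y : ↥I → X → Y,
        (∀ t : ↥I, ∀ x ∈ B, ρ (F t x) (y t x)) ∧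
        (∀ x ∈ B,
          (fun t : ↥I =>
            F ⟨(t : EuclideanSpace ℝ (Fin n)) + τ, hII' τ hτ t t.2⟩ x - y t x) ∈ P) ∧
        (∀ x ∈ B,
          d (fun t : ↥I =>
            F ⟨(t : EuclideanSpace ℝ (Fin n)) + τ, hII' τ hτ t t.2⟩ x - y t x) 0 ≤ ε)

theorem BohrAP.comp {n : ℕ} {X Y Z : Type*} [SubtractionMonoid Y] [SubtractionMonoid Z]
    {I I' : Set (EuclideanSpace ℝ (Fin n))} {hII' : ∀ τ ∈ I', ∀ t ∈ I, t + τ ∈ I}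
    {𝓑 : Set (Set X)} {ρ : Y → Y → Prop} {ρZ : Z → Z → Prop}
    {P : Set (↥I → Y)} {d : (↥I → Y) → (↥I → Y) → ℝ}
    {PZ : Set (↥I → Z)} {dZ : (↥I → Z) → (↥I → Z) → ℝ} {F : ↥I → X → Y} (φ : Y → Z)
    (hmap : ∀ G₁ G₂ : ↥I → Y, G₁ - G₂ ∈ P → (fun t => φ (G₁ t) - φ (G₂ t)) ∈ PZ)
    (hunif : ∀ ε : ℝ, 0 < ε → ∃ δ : ℝ, 0 < δ ∧ ∀ G₁ G₂ : ↥I → Y, G₁ - G₂ ∈ P →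
      d (G₁ - G₂) 0 ≤ δ → dZ (fun t => φ (G₁ t) - φ (G₂ t)) 0 ≤ ε)
    (hcomp : ∀ (t : ↥I) (x : X) (y : Y), ρ (F t x) y → ρZ (φ (F t x)) (φ y))
    (hF : BohrAP I I' 𝓑 ρ P d hII' F) :
    BohrAP I I' 𝓑 ρZ PZ dZ hII' (fun t x => φ (F t x)) := by
  intro B hB ε hε
  -- Almost periods of `F` for the accuracy `δ` that `hunif` attaches to `ε` serve `φ ∘ F`,
  -- with the witnesses `y` replaced by `φ ∘ y`.
  obtain ⟨δ, hδ, hφδ⟩ := hunif ε hε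
  obtain ⟨l, hl, hperiods⟩ := hF B hB δ hδ
  refine ⟨l, hl, fun t₀ ht₀ => ?_⟩
  obtain ⟨τ, hτ, hτt₀, y, hρ, hmem, hdist⟩ := hperiods t₀ ht₀
  let Fτ : X → ↥I → Y := fun x t => F ⟨(t : EuclideanSpace ℝ (Fin n)) + τ, hII' τ hτ t t.2⟩ x
  refine ⟨τ, hτ, hτt₀, fun t x => φ (y t x), fun t x hx => hcomp t x _ (hρ t x hx),
    fun x hx => hmap (Fτ x) (fun t => y t x) (hmem x hx),
    fun x hx => hφδ (Fτ x) (fun t => y t x) (hmem x hx) (hdist x hx)⟩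

theorem stmt11_general {n : ℕ} {X Y Z : Type*}
    [NormedAddCommGroup Y] [NormedAddCommGroup Z]
    (I I' : Set (EuclideanSpace ℝ (Fin n)))
    (hII' : ∀ τ ∈ I', ∀ t ∈ I, t + τ ∈ I)
    (𝓑 : Set (Set X))
    (ρ : Y → Y → Prop) (ρZ : Z → Z → Prop)
    (P : Set (↥I → Y)) (d : (↥I → Y) → (↥I → Y) → ℝ)
    (PZ : Set (↥I → Z)) (dZ : (↥I → Z) → (↥I → Z) → ℝ)
    (φ : Y → Z)
    (hmap : ∀ G₁ G₂ : ↥I → Y, G₁ - G₂ ∈ P →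
      (fun t => φ (G₁ t) - φ (G₂ t)) ∈ PZ)
    (hunif : ∀ ε : ℝ, 0 < ε → ∃ δ : ℝ, 0 < δ ∧ ∀ G₁ G₂ : ↥I → Y, G₁ - G₂ ∈ P →
      d (G₁ - G₂) 0 ≤ δ → dZ (fun t => φ (G₁ t) - φ (G₂ t)) 0 ≤ ε)
    (F : ↥I → X → Y)
    (hcomp : ∀ (t : ↥I) (x : X) (y : Y), ρ (F t x) y → ρZ (φ (F t x)) (φ y))
    (hF : BohrAP I I' 𝓑 ρ P d hII' F) :
    BohrAP I I' 𝓑 ρZ PZ dZ hII' (fun t x => φ (F t x)) :=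
  hF.comp φ hmap hunif hcomp

/-- If `φ : Y → Z` is uniformly continuous with respect to `𝒫` and `𝒫_Z`, maps
`P`-differences to `P_Z`-differences, and is compatible with the relations `ρ` and `ρ_Z`,
then `φ∘F` is Bohr `(𝓑,I',ρ_Z,𝒫_Z)`-almost periodic whenever `F` is Bohr
`(𝓑,I',ρ,𝒫)`-almost periodic. -/
theorem stmt11 {n : ℕ} {X Y Z : Type*}
    [NormedAddCommGroup X] [NormedSpace ℂ X] [CompleteSpace X]
    [NormedAddCommGroup Y] [NormedSpace ℂ Y] [CompleteSpace Y]
    [NormedAddCommGroup Z] [NormedSpace ℂ Z] [CompleteSpace Z]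
    (I I' : Set (EuclideanSpace ℝ (Fin n))) (hI : I.Nonempty) (hI' : I'.Nonempty)
    (hII' : ∀ τ ∈ I', ∀ t ∈ I, t + τ ∈ I)
    (𝓑 : Set (Set X)) (h𝓑ne : 𝓑.Nonempty) (h𝓑 : ∀ B ∈ 𝓑, B.Nonempty)
    (h𝓑union : ∀ x : X, ∃ B ∈ 𝓑, x ∈ B)
    (ρ : Y → Y → Prop) (ρZ : Z → Z → Prop)
    (P : Set (↥I → Y)) (d : (↥I → Y) → (↥I → Y) → ℝ)
    (hP0 : (0 : ↥I → Y) ∈ P) (hPd : IsMetricOn P d)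
    (PZ : Set (↥I → Z)) (dZ : (↥I → Z) → (↥I → Z) → ℝ)
    (hPZ0 : (0 : ↥I → Z) ∈ PZ) (hPZd : IsMetricOn PZ dZ)
    (φ : Y → Z)
    (hmap : ∀ G₁ G₂ : ↥I → Y, G₁ - G₂ ∈ P →
      (fun t => φ (G₁ t) - φ (G₂ t)) ∈ PZ)
    (hunif : ∀ ε : ℝ, 0 < ε → ∃ δ : ℝ, 0 < δ ∧ ∀ G₁ G₂ : ↥I → Y, G₁ - G₂ ∈ P →
      d (G₁ - G₂) 0 ≤ δ → dZ (fun t => φ (G₁ t) - φ (G₂ t)) 0 ≤ ε)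
    (F : ↥I → X → Y)
    (hcomp : ∀ (t : ↥I) (x : X) (y : Y), ρ (F t x) y → ρZ (φ (F t x)) (φ y))
    (hF : BohrAP I I' 𝓑 ρ P d hII' F) :
    BohrAP I I' 𝓑 ρZ PZ dZ hII' (fun t x => φ (F t x)) :=
  stmt11_general I I' hII' 𝓑 ρ ρZ P d PZ dZ φ hmap hunif F hcomp hF
end
end

section
/- Let I = [0,∞), let Y be a complex Banach space, let T ∈ L(Y), and let 𝒫 = (P,d) be a metric space where P is a set of functions from I to Y containing 0, P is closed under addition and scalar multiplication, d is translation invariant (d(f+g,h+g) = d(f,h) whenever f,h,f+g,h+g ∈ P), and such that: for every f ∈ P and τ ∈ I, f(·+τ) ∈ P and ‖f(·+τ)‖_P = ‖f‖_P, and for every f ∈ P, T∘f ∈ P and ‖T∘f‖_P ≤ c_T ‖f‖_P for some constant c_T > 0 independent of f. If F : I → Y is (T,𝒫)-almost periodic, then for every m ∈ ℕ the function F is (T^m,𝒫)-almost periodic; in particular, if T^m = 𝐈 for some m ∈ ℕ, then F is 𝒫-almost periodic (i.e., (𝐈,𝒫)-almost periodic). -/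
noncomputable section

/-- `(S,𝒫)`-almost periodicity of `F : [0,∞) → Y`, for a bounded linear operator
`S ∈ L(Y)`: for every `ε > 0` there is `l > 0` such that every interval `B(t₀,l) ∩ [0,∞)`
contains a point `τ` with `F(·+τ) − S∘F ∈ P` and `‖F(·+τ) − S∘F‖_P ≤ ε`. -/
def SAP {Y : Type*} [NormedAddCommGroup Y] [NormedSpace ℂ Y]
    (S : Y →L[ℂ] Y)
    (P : Set (↥(Set.Ici (0 : ℝ)) → Y))
    (d : (↥(Set.Ici (0 : ℝ)) → Y) → (↥(Set.Ici (0 : ℝ)) → Y) → ℝ)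
    (F : ↥(Set.Ici (0 : ℝ)) → Y) : Prop :=
  ∀ ε : ℝ, 0 < ε → ∃ l : ℝ, 0 < l ∧ ∀ t₀ : ℝ, 0 ≤ t₀ →
    ∃ τ : ℝ, ∃ hτ : 0 ≤ τ, |τ - t₀| ≤ l ∧
      (fun t : ↥(Set.Ici (0 : ℝ)) =>
        F ⟨(t : ℝ) + τ, add_nonneg t.2 hτ⟩ - S (F t)) ∈ P ∧
      d (fun t : ↥(Set.Ici (0 : ℝ)) =>
        F ⟨(t : ℝ) + τ, add_nonneg t.2 hτ⟩ - S (F t)) 0 ≤ ε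

/-!
With `δ(τ) := F(·+τ) − T∘F`, the identity
`F(·+σ+τ) − (S U)∘F = [F(·+τ) − S∘F](·+σ) + S∘[F(·+σ) − U∘F]`
together with the translation invariance of `‖·‖_P` and the bound `‖T∘f‖_P ≤ c_T ‖f‖_P` gives
`‖F(·+mτ) − T^m∘F‖_P ≤ (1 + c_T + ⋯ + c_T^{m-1}) ‖δ(τ)‖_P`.
So if `τ` is an `ε`-almost period for `T` near `t₀/m`, then `mτ` is a `(1 + ⋯ + c_T^{m-1}) ε`-almost
period for `T^m` within distance `m l` of `t₀`.
-/

local notation "I" => Set.Elem (Set.Ici (0 : ℝ))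

theorem IsMetricOn.dist_add_zero_le {α Y : Type*} [AddMonoid Y] {P : Set (α → Y)}
    {d : (α → Y) → (α → Y) → ℝ} (hd : IsMetricOn P d) (hP0 : (0 : α → Y) ∈ P)
    (hdtrans : ∀ f g h : α → Y, f ∈ P → h ∈ P → f + g ∈ P → h + g ∈ P →
      d (f + g) (h + g) = d f h)
    {f g : α → Y} (hf : f ∈ P) (hg : g ∈ P) (hfg : f + g ∈ P) :
    d (f + g) 0 ≤ d f 0 + d g 0 := by
  have hshift : d (f + g) (0 + g) = d f 0 := hdtrans f g 0 hf hP0 hfg (by rwa [zero_add])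
  rw [zero_add] at hshift
  calc d (f + g) 0 ≤ d (f + g) g + d g 0 := hd.2.2.2 _ hfg _ hg _ hP0
    _ = d f 0 + d g 0 := by rw [hshift]

def shiftBy {Y : Type*} (σ : ℝ) (hσ : 0 ≤ σ) (f : I → Y) : I → Y :=
  fun t => f ⟨t + σ, add_nonneg t.2 hσ⟩

section Defect

variable {Y : Type*} [NormedAddCommGroup Y] [NormedSpace ℂ Y]

def apDefect (S : Y →L[ℂ] Y) (F : I → Y) (τ : ℝ) (hτ : 0 ≤ τ) : I → Y :=
  fun t => F ⟨t + τ, add_nonneg t.2 hτ⟩ - S (F t)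

theorem apDefect_congr (S : Y →L[ℂ] Y) (F : I → Y) {τ τ' : ℝ} (h : τ = τ') (hτ : 0 ≤ τ)
    (hτ' : 0 ≤ τ') : apDefect S F τ hτ = apDefect S F τ' hτ' := by
  subst h
  rfl

theorem apDefect_one_zero (F : I → Y) : apDefect 1 F 0 le_rfl = 0 := by
  funext t
  simp [apDefect]

theorem apDefect_mul_add (S U : Y →L[ℂ] Y) (F : I → Y) {σ τ : ℝ} (hσ : 0 ≤ σ) (hτ : 0 ≤ τ) :
    apDefect (S * U) F (σ + τ) (add_nonneg hσ hτ) =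
      shiftBy σ hσ (apDefect S F τ hτ) + fun t => S (apDefect U F σ hσ t) := by
  funext t
  simp only [apDefect, shiftBy, Pi.add_apply, map_sub, mul_apply_eq_comp, add_assoc]
  abel

theorem apDefect_pow_mem_and_le {T : Y →L[ℂ] Y} {P : Set (I → Y)} {d : (I → Y) → (I → Y) → ℝ}
    (hP0 : (0 : I → Y) ∈ P) (hPd : IsMetricOn P d) (hPadd : ∀ f ∈ P, ∀ g ∈ P, f + g ∈ P)
    (hdtrans : ∀ f g h : I → Y, f ∈ P → h ∈ P → f + g ∈ P → h + g ∈ P →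
      d (f + g) (h + g) = d f h)
    (htransl : ∀ f ∈ P, ∀ σ : ℝ, ∀ hσ : 0 ≤ σ,
      shiftBy σ hσ f ∈ P ∧ d (shiftBy σ hσ f) 0 = d f 0)
    {cT : ℝ} (hcT : 0 ≤ cT)
    (hT : ∀ f ∈ P, (fun t => T (f t)) ∈ P ∧ d (fun t => T (f t)) 0 ≤ cT * d f 0)
    {F : I → Y} {τ : ℝ} (hτ : 0 ≤ τ) (hδ : apDefect T F τ hτ ∈ P)
    (k : ℕ) (hk : 0 ≤ (k : ℝ) * τ) :
    apDefect (T ^ k) F (k * τ) hk ∈ P ∧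
      d (apDefect (T ^ k) F (k * τ) hk) 0 ≤
        (∑ j ∈ Finset.range k, cT ^ j) * d (apDefect T F τ hτ) 0 := by
  induction k with
  | zero =>
    rw [apDefect_congr _ F (by simp) hk le_rfl, pow_zero, apDefect_one_zero]
    simp [hP0, hPd.1 0 hP0]
  | succ k ih =>
    have hkτ : 0 ≤ (k : ℝ) * τ := by positivity
    obtain ⟨hmem, hle⟩ := ih hkτ
    rw [apDefect_congr _ F (by push_cast; ring) hk (add_nonneg hkτ hτ), pow_succ',
      apDefect_mul_add _ _ _ hkτ hτ]
    obtain ⟨hshift_mem, hshift_eq⟩ := htransl _ hδ _ hkτ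
    obtain ⟨hT_mem, hT_le⟩ := hT _ hmem
    refine ⟨hPadd _ hshift_mem _ hT_mem, ?_⟩
    set δ := d (apDefect T F τ hτ) 0
    calc _ ≤ d (shiftBy _ hkτ (apDefect T F τ hτ)) 0
            + d (fun t => T (apDefect (T ^ k) F _ hkτ t)) 0 :=
          hPd.dist_add_zero_le hP0 hdtrans hshift_mem hT_mem (hPadd _ hshift_mem _ hT_mem)
      _ ≤ δ + cT * ((∑ j ∈ Finset.range k, cT ^ j) * δ) := by
          rw [hshift_eq]
          gcongr
          exact hT_le.trans (by gcongr)
      _ = _ := by rw [geom_sum_succ]; ring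

end Defect

theorem SAP.pow {Y : Type*} [NormedAddCommGroup Y] [NormedSpace ℂ Y] {T : Y →L[ℂ] Y}
    {P : Set (I → Y)} {d : (I → Y) → (I → Y) → ℝ}
    (hP0 : (0 : I → Y) ∈ P) (hPd : IsMetricOn P d) (hPadd : ∀ f ∈ P, ∀ g ∈ P, f + g ∈ P)
    (hdtrans : ∀ f g h : I → Y, f ∈ P → h ∈ P → f + g ∈ P → h + g ∈ P →
      d (f + g) (h + g) = d f h)
    (htransl : ∀ f ∈ P, ∀ σ : ℝ, ∀ hσ : 0 ≤ σ,
      shiftBy σ hσ f ∈ P ∧ d (shiftBy σ hσ f) 0 = d f 0)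
    {cT : ℝ} (hcT : 0 ≤ cT)
    (hT : ∀ f ∈ P, (fun t => T (f t)) ∈ P ∧ d (fun t => T (f t)) 0 ≤ cT * d f 0)
    {F : I → Y} (hF : SAP T P d F) {m : ℕ} (hm : 0 < m) : SAP (T ^ m) P d F := by
  intro ε hε
  set B := ∑ j ∈ Finset.range m, cT ^ j
  have hB : 0 < B := geom_sum_pos hcT hm.ne'
  have hm' : (0 : ℝ) < m := by exact_mod_cast hm
  obtain ⟨l, hl, hF'⟩ := hF (ε / B) (by positivity)
  refine ⟨m * l, by positivity, fun t₀ ht₀ => ?_⟩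
  obtain ⟨τ, hτ, hτt₀, hδ_mem, hδ_le⟩ := hF' (t₀ / m) (by positivity)
  obtain ⟨hmem, hle⟩ :=
    apDefect_pow_mem_and_le hP0 hPd hPadd hdtrans htransl hcT hT hτ hδ_mem m (by positivity)
  refine ⟨m * τ, by positivity, ?_, hmem, ?_⟩
  · calc |m * τ - t₀| = |m * (τ - t₀ / m)| := by rw [mul_sub, mul_div_cancel₀ _ hm'.ne']
      _ = m * |τ - t₀ / m| := by rw [abs_mul, abs_of_pos hm']
      _ ≤ m * l := by gcongr
  · calc _ ≤ B * d (apDefect T F τ hτ) 0 := hle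
      _ ≤ B * (ε / B) := mul_le_mul_of_nonneg_left hδ_le hB.le
      _ = ε := mul_div_cancel₀ _ hB.ne'

theorem stmt12_general {Y : Type*} [NormedAddCommGroup Y] [NormedSpace ℂ Y]
    (T : Y →L[ℂ] Y)
    (P : Set (↥(Set.Ici (0 : ℝ)) → Y))
    (d : (↥(Set.Ici (0 : ℝ)) → Y) → (↥(Set.Ici (0 : ℝ)) → Y) → ℝ)
    (hP0 : (0 : ↥(Set.Ici (0 : ℝ)) → Y) ∈ P) (hPd : IsMetricOn P d)
    (hPadd : ∀ f ∈ P, ∀ g ∈ P, f + g ∈ P)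
    (hdtrans : ∀ f g h : ↥(Set.Ici (0 : ℝ)) → Y, f ∈ P → h ∈ P → f + g ∈ P → h + g ∈ P →
      d (f + g) (h + g) = d f h)
    (htransl : ∀ f ∈ P, ∀ τ : ℝ, ∀ hτ : 0 ≤ τ,
      (fun t : ↥(Set.Ici (0 : ℝ)) => f ⟨(t : ℝ) + τ, add_nonneg t.2 hτ⟩) ∈ P ∧
      d (fun t : ↥(Set.Ici (0 : ℝ)) => f ⟨(t : ℝ) + τ, add_nonneg t.2 hτ⟩) 0 = d f 0)
    (cT : ℝ) (hcT : 0 < cT)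
    (hT : ∀ f ∈ P, (fun t => T (f t)) ∈ P ∧ d (fun t => T (f t)) 0 ≤ cT * d f 0)
    (F : ↥(Set.Ici (0 : ℝ)) → Y)
    (hF : SAP T P d F) :
    (∀ m : ℕ, 0 < m → SAP (T ^ m) P d F) ∧
      (∀ m : ℕ, 0 < m → T ^ m = 1 → SAP (1 : Y →L[ℂ] Y) P d F) := by
  refine ⟨fun m hm => hF.pow hP0 hPd hPadd hdtrans htransl hcT.le hT hm, fun m hm hTm => ?_⟩
  simpa only [hTm] using hF.pow hP0 hPd hPadd hdtrans htransl hcT.le hT hm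

/-- If `F : [0,∞) → Y` is `(T,𝒫)`-almost periodic, then `F` is `(T^m,𝒫)`-almost periodic
for every `m ∈ ℕ`; in particular, if `T^m = 𝐈` for some `m`, then `F` is `𝒫`-almost
periodic, i.e., `(𝐈,𝒫)`-almost periodic. -/
theorem stmt12 {Y : Type*} [NormedAddCommGroup Y] [NormedSpace ℂ Y] [CompleteSpace Y]
    (T : Y →L[ℂ] Y)
    (P : Set (↥(Set.Ici (0 : ℝ)) → Y))
    (d : (↥(Set.Ici (0 : ℝ)) → Y) → (↥(Set.Ici (0 : ℝ)) → Y) → ℝ)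
    (hP0 : (0 : ↥(Set.Ici (0 : ℝ)) → Y) ∈ P) (hPd : IsMetricOn P d)
    (hPadd : ∀ f ∈ P, ∀ g ∈ P, f + g ∈ P)
    (hPsmul : ∀ c : ℂ, ∀ f ∈ P, c • f ∈ P)
    (hdtrans : ∀ f g h : ↥(Set.Ici (0 : ℝ)) → Y, f ∈ P → h ∈ P → f + g ∈ P → h + g ∈ P →
      d (f + g) (h + g) = d f h)
    (htransl : ∀ f ∈ P, ∀ τ : ℝ, ∀ hτ : 0 ≤ τ,
      (fun t : ↥(Set.Ici (0 : ℝ)) => f ⟨(t : ℝ) + τ, add_nonneg t.2 hτ⟩) ∈ P ∧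
      d (fun t : ↥(Set.Ici (0 : ℝ)) => f ⟨(t : ℝ) + τ, add_nonneg t.2 hτ⟩) 0 = d f 0)
    (cT : ℝ) (hcT : 0 < cT)
    (hT : ∀ f ∈ P, (fun t => T (f t)) ∈ P ∧ d (fun t => T (f t)) 0 ≤ cT * d f 0)
    (F : ↥(Set.Ici (0 : ℝ)) → Y)
    (hF : SAP T P d F) :
    (∀ m : ℕ, 0 < m → SAP (T ^ m) P d F) ∧
      (∀ m : ℕ, 0 < m → T ^ m = 1 → SAP (1 : Y →L[ℂ] Y) P d F) :=
  stmt12_general T P d hP0 hPd hPadd hdtrans htransl cT hcT hT F hF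
end
end

section
/- Let Y be a complex Banach space, let n ∈ ℕ, let ν : ℝⁿ → (0,∞) be a function such that 1/ν is locally bounded and lim_{|t|→∞} ν(t) = +∞, let ω ∈ ℝⁿ \ {0}, and let F : ℝⁿ → Y be a function satisfying the supremum formula sup_{t∈ℝⁿ} ‖F(t+ω) − F(t)‖_Y = sup_{t∈ℝⁿ, |t|≥a} ‖F(t+ω) − F(t)‖_Y for all a > 0. If F(·+ω) − F(·) ∈ C_{0,ν}(ℝⁿ : Y), then F is ω-periodic, i.e., F(t+ω) = F(t) for all t ∈ ℝⁿ. -/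
/-!
Since `ν → ∞` at infinity, membership in `C_{0,ν}` forces `‖F(t+ω) − F(t)‖ → 0` as `|t| → ∞`.
The supremum formula then bounds `‖F(t+ω) − F(t)‖` everywhere by its supremum over `|t| ≥ a`,
which is arbitrarily small for large `a`.
-/

noncomputable section

open Filter

open Topology

theorem tendsto_norm_zero_of_tendsto_norm_mul_of_tendsto_atTop {α E : Type*}
    [NormedAddCommGroup E] {l : Filter α} {u : α → E} {ν : α → ℝ}
    (hu : Tendsto (fun t => ‖u t‖ * ν t) l (𝓝 0)) (hν : Tendsto ν l atTop) :
    Tendsto (fun t => ‖u t‖) l (𝓝 0) :=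
  squeeze_zero' (.of_forall fun _ => norm_nonneg _)
    ((hν.eventually_ge_atTop 1).mono fun _ h => le_mul_of_one_le_right (norm_nonneg _) h) hu

theorem eq_zero_of_tendsto_norm_of_sup_eq_sup_norm_ge {E Y : Type*}
    [NormedAddCommGroup E] [NormedAddCommGroup Y] {G : E → Y}
    (hG : Tendsto (fun t => ‖G t‖) (comap (fun t : E => ‖t‖) atTop) (𝓝 0))
    (hsup : ∀ a : ℝ, 0 < a → ∀ M : ℝ, (∀ t : E, a ≤ ‖t‖ → ‖G t‖ ≤ M) → ∀ t : E, ‖G t‖ ≤ M)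
    (t : E) : G t = 0 := by
  refine norm_le_zero_iff.mp (le_of_forall_pos_le_add fun ε hε => ?_)
  obtain ⟨b, hb⟩ := eventually_atTop.mp (eventually_comap.mp (hG.eventually (ge_mem_nhds hε)))
  rw [zero_add]
  exact hsup (max b 1) (by positivity) ε (fun s hs => hb ‖s‖ (le_of_max_le_left hs) s rfl) t

theorem stmt13_general {n : ℕ} {Y : Type*} [NormedAddCommGroup Y]
    (ν : EuclideanSpace ℝ (Fin n) → ℝ)
    (hνtop : Filter.Tendsto ν
      (Filter.comap (fun t : EuclideanSpace ℝ (Fin n) => ‖t‖) Filter.atTop) Filter.atTop)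
    (ω : EuclideanSpace ℝ (Fin n))
    (F : EuclideanSpace ℝ (Fin n) → Y)
    (hsup : ∀ a : ℝ, 0 < a → ∀ M : ℝ,
      (∀ t : EuclideanSpace ℝ (Fin n), a ≤ ‖t‖ → ‖F (t + ω) - F t‖ ≤ M) →
      ∀ t : EuclideanSpace ℝ (Fin n), ‖F (t + ω) - F t‖ ≤ M)
    (hmem : (fun t => F (t + ω) - F t) ∈ C0nu ν) :
    ∀ t, F (t + ω) = F t := fun t =>
  sub_eq_zero.mp <| eq_zero_of_tendsto_norm_of_sup_eq_sup_norm_ge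
    (tendsto_norm_zero_of_tendsto_norm_mul_of_tendsto_atTop hmem.2 hνtop) hsup t

/-- If `ν(t) → +∞` as `|t| → ∞`, `F` satisfies the supremum formula
`sup_{t} ‖F(t+ω) − F(t)‖ = sup_{|t| ≥ a} ‖F(t+ω) − F(t)‖` for all `a > 0`, and
`F(·+ω) − F(·) ∈ C_{0,ν}(ℝⁿ : Y)`, then `F` is `ω`-periodic. -/
theorem stmt13 {n : ℕ} {Y : Type*} [NormedAddCommGroup Y] [NormedSpace ℂ Y] [CompleteSpace Y]
    (ν : EuclideanSpace ℝ (Fin n) → ℝ) (hν : ∀ t, 0 < ν t)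
    (hloc : ∀ r : ℝ, 0 < r → ∃ M : ℝ, ∀ t : EuclideanSpace ℝ (Fin n), ‖t‖ ≤ r → 1 / ν t ≤ M)
    (hνtop : Filter.Tendsto ν
      (Filter.comap (fun t : EuclideanSpace ℝ (Fin n) => ‖t‖) Filter.atTop) Filter.atTop)
    (ω : EuclideanSpace ℝ (Fin n)) (hω : ω ≠ 0)
    (F : EuclideanSpace ℝ (Fin n) → Y)
    (hsup : ∀ a : ℝ, 0 < a → ∀ M : ℝ,
      (∀ t : EuclideanSpace ℝ (Fin n), a ≤ ‖t‖ → ‖F (t + ω) - F t‖ ≤ M) →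
      ∀ t : EuclideanSpace ℝ (Fin n), ‖F (t + ω) - F t‖ ≤ M)
    (hmem : (fun t => F (t + ω) - F t) ∈ C0nu ν) :
    ∀ t, F (t + ω) = F t :=
  stmt13_general ν hνtop ω F hsup hmem
end
end

section
/- Let ν₁(t) := 1/(t²+1) and ν₂(t) := 1/(t⁴+1) for t ∈ ℝ, and let 𝒫_{ν₁} and 𝒫_{ν₂} be the metric spaces associated with C_{0,ν₁}(ℝ : ℂ) and C_{0,ν₂}(ℝ : ℂ) respectively. Then a continuous function F : ℝ → ℂ is Bohr 𝒫_{ν₁}-almost periodic if and only if it is Bohr 𝒫_{ν₂}-almost periodic. -/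
/-! An almost periodic function for either weight is bounded: `F t` differs from `F (t - τ)`,
with `t - τ` in a fixed compact interval, by at most `1 / ν (t - τ)`. For a bounded difference
`g = F(· + τ) - F` the two weighted sup-norms control each other: far out both weighted values
are small because the weights vanish at infinity, and on a compact interval the weights are
comparable. -/

noncomputable section

open Filter

/-- The space `C_{0,ν}(ℝ : ℂ)` of continuous functions `u` with
`|u(t)| ν(t) → 0` as `|t| → ∞`. -/
def C0nuR (ν : ℝ → ℝ) : Set (ℝ → ℂ) :=
  {u | Continuous u ∧
    Filter.Tendsto (fun t => ‖u t‖ * ν t)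
      (Filter.comap (fun t : ℝ => |t|) Filter.atTop) (nhds 0)}

/-- Bohr `𝒫_ν`-almost periodicity of `F : ℝ → ℂ`, where `𝒫_ν` is the metric space
associated with `C_{0,ν}(ℝ : ℂ)` (so that `‖f‖_P = sup_t |f(t)| ν(t)`). -/
def BohrC0nuRAP (ν : ℝ → ℝ) (F : ℝ → ℂ) : Prop :=
  ∀ ε : ℝ, 0 < ε → ∃ l : ℝ, 0 < l ∧ ∀ t₀ : ℝ, ∃ τ : ℝ, |τ - t₀| ≤ l ∧
    (fun t => F (t + τ) - F t) ∈ C0nuR ν ∧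
    ∀ t, ‖F (t + τ) - F t‖ * ν t ≤ ε

open Topology

lemma mem_C0nuR_of_bounded {ν : ℝ → ℝ} (hν : Tendsto ν (comap (fun t : ℝ => |t|) atTop) (𝓝 0))
    {u : ℝ → ℂ} (hu : Continuous u) {B : ℝ} (hB : ∀ t, ‖u t‖ ≤ B) : u ∈ C0nuR ν := by
  refine ⟨hu, ?_⟩
  have hνB : Tendsto (fun t => B * |ν t|) (comap (fun t : ℝ => |t|) atTop) (𝓝 0) := by
    simpa using hν.abs.const_mul B
  refine squeeze_zero_norm (fun t => ?_) hνB
  rw [norm_mul, norm_norm, Real.norm_eq_abs]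
  exact mul_le_mul_of_nonneg_right (hB t) (abs_nonneg _)

namespace BohrC0nuRAP

variable {ν μ : ℝ → ℝ} {F : ℝ → ℂ}

lemma exists_bound (hν : Continuous ν) (hν0 : ∀ t, 0 < ν t) (hF : Continuous F)
    (h : BohrC0nuRAP ν F) : ∃ B, ∀ t, ‖F t‖ ≤ B := by
  obtain ⟨l, -, hap⟩ := h 1 one_pos
  obtain ⟨C, hC⟩ := (isCompact_Icc (a := -l) (b := l)).exists_bound_of_continuousOn
    (f := fun s => ‖F s‖ + 1 / ν s)
    (hF.norm.add (continuous_const.div hν fun s => (hν0 s).ne')).continuousOn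
  refine ⟨C, fun t => ?_⟩
  obtain ⟨τ, hτ, -, hb⟩ := hap t
  have hdiff : ‖F t - F (t - τ)‖ ≤ 1 / ν (t - τ) := by
    rw [le_div_iff₀ (hν0 _)]
    simpa using hb (t - τ)
  have hmem : t - τ ∈ Set.Icc (-l) l := abs_le.mp (by rwa [abs_sub_comm])
  have hCt := hC (t - τ) hmem
  rw [Real.norm_of_nonneg (by have := hν0 (t - τ); positivity)] at hCt
  linarith [norm_le_insert' (F t) (F (t - τ))]

lemma of_bounded (hμ0 : ∀ t, 0 ≤ μ t)
    (hμ : Tendsto μ (comap (fun t : ℝ => |t|) atTop) (𝓝 0))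
    (hcmp : ∀ R, ∃ K > 0, ∀ t, |t| ≤ R → μ t ≤ K * ν t)
    (hF : Continuous F) {B : ℝ} (hB : ∀ t, ‖F t‖ ≤ B) (h : BohrC0nuRAP ν F) :
    BohrC0nuRAP μ F := by
  intro ε hε
  obtain ⟨R, -, hfar⟩ := ((atTop_basis.comap fun t : ℝ => |t|).eventually_iff).mp
    ((by simpa using hμ.mul_const (2 * B) :
        Tendsto (fun t => μ t * (2 * B)) _ (𝓝 0)).eventually (ge_mem_nhds hε))
  obtain ⟨K, hK, hnear⟩ := hcmp R
  obtain ⟨l, hl, hap⟩ := h (ε / K) (div_pos hε hK)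
  refine ⟨l, hl, fun t₀ => ?_⟩
  obtain ⟨τ, hτ, -, hb⟩ := hap t₀
  have hg : ∀ t, ‖F (t + τ) - F t‖ ≤ 2 * B := fun t => by
    linarith [norm_sub_le (F (t + τ)) (F t), hB (t + τ), hB t]
  refine ⟨τ, hτ, mem_C0nuR_of_bounded hμ (by fun_prop) hg, fun t => ?_⟩
  rcases le_or_gt |t| R with ht | ht
  · calc ‖F (t + τ) - F t‖ * μ t ≤ ‖F (t + τ) - F t‖ * (K * ν t) :=
          mul_le_mul_of_nonneg_left (hnear t ht) (norm_nonneg _)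
      _ = K * (‖F (t + τ) - F t‖ * ν t) := by ring
      _ ≤ K * (ε / K) := mul_le_mul_of_nonneg_left (hb t) hK.le
      _ = ε := mul_div_cancel₀ ε hK.ne'
  · calc ‖F (t + τ) - F t‖ * μ t ≤ 2 * B * μ t := mul_le_mul_of_nonneg_right (hg t) (hμ0 t)
      _ = μ t * (2 * B) := mul_comm _ _
      _ ≤ ε := hfar (Set.mem_preimage.mpr (Set.mem_Ici.mpr ht.le))

end BohrC0nuRAP

section PolynomialWeight

variable {j k : ℕ}

lemma pow_add_one_pos_of_even (hk : Even k) (t : ℝ) : 0 < t ^ k + 1 := by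
  have := hk.pow_nonneg t
  linarith

lemma continuous_one_div_pow_add_one (hk : Even k) : Continuous fun t : ℝ => 1 / (t ^ k + 1) :=
  continuous_const.div (by fun_prop) fun t => (pow_add_one_pos_of_even hk t).ne'

lemma tendsto_one_div_pow_add_one (hk : Even k) (hk0 : k ≠ 0) :
    Tendsto (fun t : ℝ => 1 / (t ^ k + 1)) (comap (fun t : ℝ => |t|) atTop) (𝓝 0) := by
  have hpow : Tendsto (fun t : ℝ => t ^ k) (comap (fun t : ℝ => |t|) atTop) atTop := by
    have := (tendsto_pow_atTop (α := ℝ) hk0).comp (tendsto_comap (f := fun t : ℝ => |t|))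
    simpa only [Function.comp_def, hk.pow_abs] using this
  exact tendsto_const_nhds.div_atTop (tendsto_atTop_add_const_right _ 1 hpow)

lemma one_div_pow_add_one_le_mul (hj : Even j) (hk : Even k) (R : ℝ) :
    ∃ K > 0, ∀ t : ℝ, |t| ≤ R → 1 / (t ^ j + 1) ≤ K * (1 / (t ^ k + 1)) := by
  refine ⟨|R| ^ k + 1, by positivity, fun t ht => ?_⟩
  have htk : t ^ k ≤ |R| ^ k := by
    rw [← hk.pow_abs]
    exact pow_le_pow_left₀ (abs_nonneg t) (ht.trans (le_abs_self R)) k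
  calc 1 / (t ^ j + 1) ≤ 1 := by
        rw [div_le_one (pow_add_one_pos_of_even hj t)]
        linarith [hj.pow_nonneg t]
    _ ≤ (|R| ^ k + 1) * (1 / (t ^ k + 1)) := by
        rw [mul_one_div, one_le_div (pow_add_one_pos_of_even hk t)]
        linarith

lemma BohrC0nuRAP.of_pow_weight (hj : Even j) (hk : Even k) (hk0 : k ≠ 0) {F : ℝ → ℂ}
    (hF : Continuous F) (h : BohrC0nuRAP (fun t : ℝ => 1 / (t ^ j + 1)) F) :
    BohrC0nuRAP (fun t : ℝ => 1 / (t ^ k + 1)) F := by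
  obtain ⟨B, hB⟩ := h.exists_bound (continuous_one_div_pow_add_one hj)
    (fun t => one_div_pos.mpr (pow_add_one_pos_of_even hj t)) hF
  exact h.of_bounded (fun t => (one_div_pos.mpr (pow_add_one_pos_of_even hk t)).le)
    (tendsto_one_div_pow_add_one hk hk0) (one_div_pow_add_one_le_mul hk hj) hF hB

end PolynomialWeight

/-- For the weights `ν₁(t) = 1/(t²+1)` and `ν₂(t) = 1/(t⁴+1)`, a continuous function
`F : ℝ → ℂ` is Bohr `𝒫_{ν₁}`-almost periodic iff it is Bohr `𝒫_{ν₂}`-almost periodic. -/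
theorem stmt14 (F : ℝ → ℂ) (hF : Continuous F) :
    BohrC0nuRAP (fun t : ℝ => 1 / (t ^ 2 + 1)) F ↔
      BohrC0nuRAP (fun t : ℝ => 1 / (t ^ 4 + 1)) F :=
  ⟨BohrC0nuRAP.of_pow_weight even_two (by decide) (by norm_num) hF,
    BohrC0nuRAP.of_pow_weight (by decide) even_two (by norm_num) hF⟩
end
end

section
/- Let Y be a complex Banach space, let 1 ≤ p < ∞, let ζ > 1, and set ν(t) := 1/(|t|^ζ + 1) for t ∈ ℝ. If f : ℝ → Y is Stepanov p-almost periodic, then f is Bohr 𝒫-almost periodic, where 𝒫 = (P,d) is the metric space with P = L^p_ν(ℝ : Y) := {g : ℝ → Y measurable : ∫_ℝ ‖g(t)‖^p ν(t)^p dt < ∞}, ‖g‖_P := (∫_ℝ ‖g(t)‖^p ν(t)^p dt)^{1/p}, and d(f,g) := ‖f−g‖_P; that is, for every ε > 0 there exists l > 0 such that for each t₀ ∈ ℝ there exists τ with |τ − t₀| ≤ l, f(·+τ) − f ∈ L^p_ν(ℝ : Y), and (∫_ℝ ‖f(t+τ) − f(t)‖^p ν(t)^p dt)^{1/p} ≤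 ε. -/
/-!
Since `p ≥ 1` and `ν ≤ 1`, we have `ν ^ p ≤ ν`; moreover `ν` changes by at most the factor
`2 ^ ζ + 1` across a unit interval, and `∑ n : ℤ, ν n < ∞` because `ζ > 1`. Cutting `ℝ` into the
blocks `[n, n + 1)` therefore bounds `∫ ‖f (t + τ) - f t‖ ^ p ν(t) ^ p dt` by
`(2 ^ ζ + 1) ∑ ν n` times the largest block integral `∫ₙⁿ⁺¹ ‖f (s + τ) - f s‖ ^ p ds`, so a
Stepanov period for a small enough tolerance is a period in `L^p_ν` for the tolerance `ε`.
-/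

open MeasureTheory Set

theorem integrable_mul_and_integral_le_of_unit_blocks {g ν : ℝ → ℝ} {w : ℤ → ℝ} {M : ℝ}
    (hg_nonneg : ∀ t, 0 ≤ g t) (hg : ∀ n : ℤ, IntegrableOn g (Ico (n : ℝ) (n + 1)))
    (hgM : ∀ n : ℤ, ∫ t in Ico (n : ℝ) (n + 1), g t ≤ M)
    (hν : AEStronglyMeasurable ν) (hν_nonneg : ∀ t, 0 ≤ ν t)
    (hνw : ∀ n : ℤ, ∀ t ∈ Ico (n : ℝ) (n + 1), ν t ≤ w n) (hw : Summable w) :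
    Integrable (fun t => g t * ν t) ∧ ∫ t, g t * ν t ≤ (∑' n, w n) * M := by
  have hblock_int (n : ℤ) : IntegrableOn (fun t => g t * ν t) (Ico (n : ℝ) (n + 1)) :=
    (hg n).mul_bdd hν.restrict <| ae_restrict_of_forall_mem measurableSet_Ico fun t ht => by
      rw [Real.norm_of_nonneg (hν_nonneg t)]; exact hνw n t ht
  have hblock_le (n : ℤ) : ∫ t in Ico (n : ℝ) (n + 1), g t * ν t ≤ w n * M :=
    calc ∫ t in Ico (n : ℝ) (n + 1), g t * ν t
        ≤ ∫ t in Ico (n : ℝ) (n + 1), g t * w n :=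
          setIntegral_mono_on (hblock_int n) ((hg n).mul_const _) measurableSet_Ico
            fun t ht => mul_le_mul_of_nonneg_left (hνw n t ht) (hg_nonneg t)
      _ = (∫ t in Ico (n : ℝ) (n + 1), g t) * w n := integral_mul_const _ _
      _ ≤ w n * M := by
          rw [mul_comm]
          exact mul_le_mul_of_nonneg_left (hgM n)
            ((hν_nonneg n).trans (hνw n n (left_mem_Ico.2 (lt_add_one _))))
  have hblock_nonneg (n : ℤ) : 0 ≤ ∫ t in Ico (n : ℝ) (n + 1), g t * ν t :=
    setIntegral_nonneg measurableSet_Ico fun t _ => mul_nonneg (hg_nonneg t) (hν_nonneg t)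
  have hsum : Summable fun n : ℤ => ∫ t in Ico (n : ℝ) (n + 1), g t * ν t :=
    (hw.mul_right M).of_nonneg_of_le hblock_nonneg hblock_le
  have hint : Integrable (fun t => g t * ν t) := by
    have := integrableOn_iUnion_of_summable_integral_norm hblock_int <| by
      simpa only [Real.norm_of_nonneg (mul_nonneg (hg_nonneg _) (hν_nonneg _))] using hsum
    rwa [iUnion_Ico_intCast, integrableOn_univ] at this
  refine ⟨hint, ?_⟩
  calc ∫ t, g t * ν t = ∑' n : ℤ, ∫ t in Ico (n : ℝ) (n + 1), g t * ν t := by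
        rw [← integral_iUnion (fun n => measurableSet_Ico) (pairwise_disjoint_Ico_intCast ℝ)
          (by rw [iUnion_Ico_intCast]; exact hint.integrableOn), iUnion_Ico_intCast,
          setIntegral_univ]
    _ ≤ ∑' n, w n * M := hsum.tsum_le_tsum hblock_le (hw.mul_right M)
    _ = (∑' n, w n) * M := tsum_mul_right

lemma MeasureTheory.MemLp.restrict_Icc_comp_add_right {E : Type*} [NormedAddCommGroup E]
    {f : ℝ → E} {q : ENNReal} {a b τ : ℝ}
    (hf : MemLp f q (volume.restrict (Icc (a + τ) (b + τ)))) :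
    MemLp (fun s => f (s + τ)) q (volume.restrict (Icc a b)) := by
  have h := (measurePreserving_add_right volume τ).restrict_preimage
    (measurableSet_Icc (a := a + τ) (b := b + τ))
  rw [preimage_add_const_Icc, add_sub_cancel_right, add_sub_cancel_right] at h
  exact hf.comp_measurePreserving h

lemma integrableOn_norm_sub_comp_add_rpow {E : Type*} [NormedAddCommGroup E] {f : ℝ → E}
    {p : ℝ} (hp : 0 < p) (hf : AEStronglyMeasurable f)
    (hloc : ∀ a b : ℝ, IntegrableOn (fun s => ‖f s‖ ^ p) (Icc a b)) (τ a b : ℝ) :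
    IntegrableOn (fun s => ‖f (s + τ) - f s‖ ^ p) (Icc a b) := by
  have hLp (a b : ℝ) : MemLp f (ENNReal.ofReal p) (volume.restrict (Icc a b)) :=
    (integrable_norm_rpow_iff hf.restrict (by simpa using hp) ENNReal.ofReal_ne_top).1
      (by rw [ENNReal.toReal_ofReal hp.le]; exact hloc a b)
  simpa only [IntegrableOn, Pi.sub_apply, ENNReal.toReal_ofReal hp.le] using
    ((hLp (a + τ) (b + τ)).restrict_Icc_comp_add_right.sub (hLp a b)).integrable_norm_rpow'

noncomputable def polyWeight (ζ t : ℝ) : ℝ := 1 / (|t| ^ ζ + 1)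

namespace polyWeight

variable {ζ : ℝ}

lemma pos (ζ t : ℝ) : 0 < polyWeight ζ t := by
  unfold polyWeight; positivity

lemma le_one (ζ t : ℝ) : polyWeight ζ t ≤ 1 := by
  unfold polyWeight
  exact div_le_one_of_le₀ (le_add_of_nonneg_left (by positivity)) (by positivity)

lemma rpow_le {p : ℝ} (hp : 1 ≤ p) (t : ℝ) : polyWeight ζ t ^ p ≤ polyWeight ζ t :=
  Real.rpow_le_self_of_le_one (pos ζ t).le (le_one ζ t) hp

lemma measurable (ζ : ℝ) : Measurable (polyWeight ζ) := by
  unfold polyWeight; fun_prop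

lemma le_mul_of_abs_sub_le (hζ : 0 ≤ ζ) {s t : ℝ} (hst : |s - t| ≤ 1) :
    polyWeight ζ t ≤ (2 ^ ζ + 1) * polyWeight ζ s := by
  have hs : |s| ≤ 2 * max |t| 1 := by
    have := abs_sub_abs_le_abs_sub s t
    linarith [le_max_left |t| 1, le_max_right |t| 1]
  have hmax : max |t| 1 ^ ζ ≤ |t| ^ ζ + 1 := by
    rcases le_total |t| 1 with h | h
    · rw [max_eq_right h, Real.one_rpow]; linarith [Real.rpow_nonneg (abs_nonneg t) ζ]
    · rw [max_eq_left h]; linarith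
  have hsζ : |s| ^ ζ ≤ 2 ^ ζ * (|t| ^ ζ + 1) :=
    calc |s| ^ ζ ≤ (2 * max |t| 1) ^ ζ := Real.rpow_le_rpow (abs_nonneg s) hs hζ
      _ = 2 ^ ζ * max |t| 1 ^ ζ := Real.mul_rpow zero_le_two (by positivity)
      _ ≤ 2 ^ ζ * (|t| ^ ζ + 1) := by gcongr
  unfold polyWeight
  rw [mul_one_div, div_le_div_iff₀ (by positivity) (by positivity)]
  nlinarith [Real.rpow_nonneg (abs_nonneg t) ζ, Real.rpow_nonneg zero_le_two ζ]

lemma summable_intCast (hζ : 1 < ζ) : Summable fun n : ℤ => polyWeight ζ n := by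
  refine (Real.summable_abs_int_rpow hζ).of_norm_bounded_eventually ?_
  filter_upwards [(Set.finite_singleton (0 : ℤ)).compl_mem_cofinite] with n hn
  have hn : (0 : ℝ) < |(n : ℝ)| := abs_pos.2 (Int.cast_ne_zero.2 hn)
  rw [Real.norm_of_nonneg (pos ζ n).le, Real.rpow_neg hn.le, ← one_div]
  exact one_div_le_one_div_of_le (by positivity) (le_add_of_nonneg_right zero_le_one)

end polyWeight

theorem stmt17_general {Y : Type*} [NormedAddCommGroup Y]
    (p : ℝ) (hp : 1 ≤ p) (ζ : ℝ) (hζ : 1 < ζ)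
    (f : ℝ → Y)
    (hmeas : MeasureTheory.AEStronglyMeasurable f MeasureTheory.volume)
    (hloc : ∀ a b : ℝ, MeasureTheory.IntegrableOn (fun s => ‖f s‖ ^ p) (Set.Icc a b))
    (hstep : ∀ ε : ℝ, 0 < ε → ∃ l : ℝ, 0 < l ∧ ∀ t₀ : ℝ, ∃ τ : ℝ, |τ - t₀| ≤ l ∧
      ∀ t : ℝ, (∫ s in Set.Icc t (t + 1), ‖f (s + τ) - f s‖ ^ p) ^ (1 / p) ≤ ε) :
    ∀ ε : ℝ, 0 < ε → ∃ l : ℝ, 0 < l ∧ ∀ t₀ : ℝ, ∃ τ : ℝ, |τ - t₀| ≤ l ∧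
      MeasureTheory.Integrable
        (fun t : ℝ => ‖f (t + τ) - f t‖ ^ p * (1 / (|t| ^ ζ + 1)) ^ p) ∧
      (∫ t : ℝ, ‖f (t + τ) - f t‖ ^ p * (1 / (|t| ^ ζ + 1)) ^ p) ^ (1 / p) ≤ ε := by
  intro ε hε
  have hp0 : 0 < p := one_pos.trans_le hp
  set C := ∑' n : ℤ, (2 ^ ζ + 1) * polyWeight ζ n
  have hC : 0 ≤ C := tsum_nonneg fun n => mul_nonneg (by positivity) (polyWeight.pos ζ n).le
  set M := ε ^ p / (C + 1)
  obtain ⟨l, hl, hperiods⟩ := hstep (M ^ (1 / p)) (by positivity)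
  refine ⟨l, hl, fun t₀ => ?_⟩
  obtain ⟨τ, hτt₀, hτ⟩ := hperiods t₀
  have hblock (n : ℤ) : ∫ s in Ico (n : ℝ) (n + 1), ‖f (s + τ) - f s‖ ^ p ≤ M := by
    rw [← integral_Icc_eq_integral_Ico, ← Real.rpow_le_rpow_iff
      (integral_nonneg fun s => by positivity) (by positivity) (one_div_pos.2 hp0)]
    exact hτ n
  obtain ⟨hint, hle⟩ := integrable_mul_and_integral_le_of_unit_blocks
    (g := fun s => ‖f (s + τ) - f s‖ ^ p) (ν := fun t => polyWeight ζ t ^ p)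
    (fun s => by positivity)
    (fun n => (integrableOn_norm_sub_comp_add_rpow hp0 hmeas hloc τ n (n + 1)).mono_set
      Ico_subset_Icc_self)
    hblock ((polyWeight.measurable ζ).pow_const p).aestronglyMeasurable
    (fun t => Real.rpow_nonneg (polyWeight.pos ζ t).le p)
    (fun n t ht => (polyWeight.rpow_le hp t).trans <| polyWeight.le_mul_of_abs_sub_le
      (by linarith) (abs_sub_le_iff.2 ⟨by linarith [ht.1], by linarith [ht.2]⟩))
    ((polyWeight.summable_intCast hζ).mul_left _)
  refine ⟨τ, hτt₀, hint, ?_⟩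
  rw [one_div, Real.rpow_inv_le_iff_of_pos (integral_nonneg fun t => ?_) hε.le hp0]
  · calc _ ≤ C * M := hle
      _ ≤ ε ^ p := by
        rw [← mul_div_assoc, div_le_iff₀ (by positivity)]
        nlinarith [Real.rpow_nonneg hε.le p]
  · exact mul_nonneg (by positivity) (Real.rpow_nonneg (polyWeight.pos ζ t).le p)

/-- A Stepanov `p`-almost periodic function `f : ℝ → Y` is Bohr `𝒫`-almost periodic for
`𝒫` the metric space associated with the weighted Lebesgue space `L^p_ν(ℝ : Y)` with the
weight `ν(t) = 1/(|t|^ζ + 1)`, `ζ > 1`. -/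
theorem stmt17 {Y : Type*} [NormedAddCommGroup Y] [NormedSpace ℂ Y] [CompleteSpace Y]
    (p : ℝ) (hp : 1 ≤ p) (ζ : ℝ) (hζ : 1 < ζ)
    (f : ℝ → Y)
    (hmeas : MeasureTheory.AEStronglyMeasurable f MeasureTheory.volume)
    (hloc : ∀ a b : ℝ, MeasureTheory.IntegrableOn (fun s => ‖f s‖ ^ p) (Set.Icc a b))
    (hstep : ∀ ε : ℝ, 0 < ε → ∃ l : ℝ, 0 < l ∧ ∀ t₀ : ℝ, ∃ τ : ℝ, |τ - t₀| ≤ l ∧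
      ∀ t : ℝ, (∫ s in Set.Icc t (t + 1), ‖f (s + τ) - f s‖ ^ p) ^ (1 / p) ≤ ε) :
    ∀ ε : ℝ, 0 < ε → ∃ l : ℝ, 0 < l ∧ ∀ t₀ : ℝ, ∃ τ : ℝ, |τ - t₀| ≤ l ∧
      MeasureTheory.Integrable
        (fun t : ℝ => ‖f (t + τ) - f t‖ ^ p * (1 / (|t| ^ ζ + 1)) ^ p) ∧
      (∫ t : ℝ, ‖f (t + τ) - f t‖ ^ p * (1 / (|t| ^ ζ + 1)) ^ p) ^ (1 / p) ≤ ε :=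
  stmt17_general p hp ζ hζ f hmeas hloc hstep
end
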